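/- arXiv:1710.00426 — 4 statements merged into one kernel-verified Lean document; each statement's English description precedes it below -/
import Mathlib

section
/- Let G be a finite connected K_{1,1,3}-free partial 2-tree. Then there exists a finite K_{1,1,3}-free series-parallel graph G* that contains G as an induced subgraph; consequently, if G* admits a proper square-contact representation then so does G. -/
open Set

structure AxSquare where
  x : ℝ
  y : ℝ
  side : ℝ
  side_pos : 0 < side

namespace AxSquare
def left (S : AxSquare) : ℝ := S.x
def right (S : AxSquare) : ℝ := S.x + S.side
def bottom (S : AxSquare) : ℝ := S.y
def top (S : AxSquare) : ℝ := S.y + S.side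
/-- The square as a subset of the plane. -/
def toSet (S : AxSquare) : Set (ℝ × ℝ) :=
  Set.Icc S.x (S.x + S.side) ×ˢ Set.Icc S.y (S.y + S.side)
end AxSquare

/-- A proper square-contact representation of `G`, restricted to the vertex set `A`. -/
def IsSCROn {V : Type} (G : SimpleGraph V) (A : Set V) (Sq : V → AxSquare) : Prop :=
  (∀ u ∈ A, ∀ v ∈ A, u ≠ v → interior (Sq u).toSet ∩ interior (Sq v).toSet = ∅) ∧
  (∀ u ∈ A, ∀ v ∈ A, G.Adj u v → ((Sq u).toSet ∩ (Sq v).toSet).Infinite) ∧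
  (∀ u ∈ A, ∀ v ∈ A, u ≠ v → ¬ G.Adj u v → (Sq u).toSet ∩ (Sq v).toSet = ∅)

/-- `G` admits a proper square-contact representation. -/
def HasSCR {V : Type} (G : SimpleGraph V) : Prop :=
  ∃ Sq : V → AxSquare, IsSCROn G Set.univ Sq

/-! ### `K_{1,1,3}` and `K_{1,1,3}`-freeness -/

/-- The complete tripartite graph `K_{1,1,3}`: vertices `0, 1` are the two adjacent
vertices, and `2, 3, 4` are pairwise non-adjacent, each adjacent to `0` and `1`. -/
def K113 : SimpleGraph (Fin 5) where
  Adj u v := u ≠ v ∧ ((u : ℕ) < 2 ∨ (v : ℕ) < 2)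
  symm := ⟨fun u v h => ⟨h.1.symm, h.2.symm⟩⟩
  loopless := ⟨fun u h => h.1 rfl⟩

/-- `G` contains no subgraph isomorphic to `K_{1,1,3}`. -/
def K113Free {V : Type} (G : SimpleGraph V) : Prop :=
  ¬ ∃ f : Fin 5 → V, Function.Injective f ∧ ∀ u v, K113.Adj u v → G.Adj (f u) (f v)

/-! ### 2-trees, partial 2-trees, series-parallel graphs -/

/-- `G` is a 2-tree: it can be built from a single edge by repeatedly adding a new
vertex adjacent to exactly the two endpoints of an already existing edge. -/
def IsTwoTree {V : Type} (G : SimpleGraph V) : Prop :=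
  ∃ (n : ℕ) (e : Fin n ≃ V), 2 ≤ n ∧
    (∀ i j : Fin n, (i : ℕ) = 0 → (j : ℕ) = 1 → G.Adj (e i) (e j)) ∧
    (∀ j : Fin n, 2 ≤ (j : ℕ) →
      ∃ a b : Fin n, (a : ℕ) < (j : ℕ) ∧ (b : ℕ) < (j : ℕ) ∧ G.Adj (e a) (e b) ∧
        ∀ i : Fin n, (i : ℕ) < (j : ℕ) → (G.Adj (e i) (e j) ↔ i = a ∨ i = b))

/-- `G` is a partial 2-tree: a subgraph of some 2-tree. -/
def IsPartialTwoTree {V : Type} (G : SimpleGraph V) : Prop :=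
  ∃ (m : ℕ) (H : SimpleGraph (Fin m)), IsTwoTree H ∧
    ∃ f : V → Fin m, Function.Injective f ∧ ∀ u v, G.Adj u v → H.Adj (f u) (f v)

/-- `G` is 2-connected (biconnected): it has at least two vertices, is connected, and
  removing any single vertex leaves it connected. -/
def TwoConnected {V : Type} [Fintype V] (G : SimpleGraph V) : Prop :=
  2 ≤ Fintype.card V ∧ G.Connected ∧
    ∀ v : V, (G.induce {u : V | u ≠ v}).Connected

/-- A series-parallel graph is a 2-connected partial 2-tree. -/
def IsSeriesParallel {V : Type} [Fintype V] (G : SimpleGraph V) : Prop :=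
  TwoConnected G ∧ IsPartialTwoTree G

/-! Place `G` inside a 2-tree `H` and add, for every dart `(u, v)` of `H`, a new path
`u, s, t, v`. Every edge of `H` then lies on a cycle through new vertices, so the result inherits
2-connectivity from the 2-tree `H`, and it is a subgraph of the 2-tree obtained from `H` by stacking
`s` on `uv` and `t` on `sv`. The new vertices lie on no triangle, whereas every vertex of
`K_{1,1,3}` does, so a copy of `K_{1,1,3}` would already lie in `G`. Finally `G` is an induced
subgraph, and a square-contact representation restricts to induced subgraphs. -/

namespace SimpleGraph

variable {V V' : Type} {G : SimpleGraph V} {G' : SimpleGraph V'}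

lemma Adj.reachable_induce_ne {x u v : V} (h : G.Adj u v) (hu : u ≠ x) (hv : v ≠ x) :
    (G.induce {w | w ≠ x}).Reachable ⟨u, hu⟩ ⟨v, hv⟩ :=
  Adj.reachable h

lemma Reachable.lift (f : V → V') (h : ∀ u v, G.Adj u v → G'.Reachable (f u) (f v)) {u v : V}
    (huv : G.Reachable u v) : G'.Reachable (f u) (f v) := by
  rw [reachable_iff_reflTransGen] at huv ⊢
  exact huv.lift' f fun a b hab => (reachable_iff_reflTransGen _ _).mp (h a b hab)

lemma Connected.of_induce_ne {x y : V} (hx : (G.induce {u | u ≠ x}).Connected) (hxy : G.Adj x y) :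
    G.Connected := by
  have hy (u : V) : G.Reachable y u := by
    by_cases hu : u = x
    · exact hu ▸ hxy.reachable.symm
    · exact (hx.preconnected ⟨y, hxy.ne.symm⟩ ⟨u, hu⟩).map (Embedding.induce _).toHom
  exact (connected_iff_exists_forall_reachable G).mpr ⟨y, hy⟩

def attach {α β : Type} (Γ : SimpleGraph α) (N : β → Set α) : SimpleGraph (α ⊕ β) where
  Adj
    | .inl a, .inl a' => Γ.Adj a a'
    | .inl a, .inr b => a ∈ N b
    | .inr b, .inl a => a ∈ N b
    | .inr _, .inr _ => False
  symm := ⟨by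
    rintro (a | b) (a' | b') h
    exacts [h.symm, h, h, h]⟩
  loopless := ⟨by
    rintro (a | b) h
    exacts [Γ.loopless.irrefl a h, h]⟩

section attach

variable {α β : Type} {Γ Γ' : SimpleGraph α} {N N' : β → Set α}

@[simp] lemma attach_adj_inl_inl {a a' : α} : (Γ.attach N).Adj (.inl a) (.inl a') ↔ Γ.Adj a a' :=
  .rfl

@[simp] lemma attach_adj_inl_inr {a : α} {b : β} : (Γ.attach N).Adj (.inl a) (.inr b) ↔ a ∈ N b :=
  .rfl

@[simp] lemma attach_adj_inr_inl {a : α} {b : β} : (Γ.attach N).Adj (.inr b) (.inl a) ↔ a ∈ N b :=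
  .rfl

@[simp] lemma not_attach_adj_inr_inr {b b' : β} : ¬ (Γ.attach N).Adj (.inr b) (.inr b') :=
  id

lemma attach_mono (hΓ : Γ ≤ Γ') (hN : ∀ b, N b ⊆ N' b) : Γ.attach N ≤ Γ'.attach N' := by
  rintro (a | b) (a' | b') h
  exacts [hΓ h, hN _ h, hN _ h, h]

def attachEmbedding (Γ : SimpleGraph α) (N : β → Set α) : Γ ↪g Γ.attach N :=
  ⟨.inl, .rfl⟩

end attach

section withPathsAlong

variable {U : Type} (Γ H : SimpleGraph U)

/-- For every dart `d = (u, v)` of `H`, the path `u, inl (inr d), inr d, v` is added to `Γ`. -/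
def withPathsAlong : SimpleGraph ((U ⊕ H.Dart) ⊕ H.Dart) :=
  (Γ.attach fun d : H.Dart => {d.fst}).attach fun d => {.inr d, .inl d.snd}

def withPathsAlongEmbedding : Γ ↪g withPathsAlong Γ H :=
  (attachEmbedding _ _).comp (attachEmbedding _ _)

variable {Γ H} {x : (U ⊕ H.Dart) ⊕ H.Dart}

lemma reachable_withPathsAlong_induce_ne (d : H.Dart)
    (h₁ : .inl (.inl d.fst) ≠ x) (h₂ : .inl (.inr d) ≠ x) (h₃ : .inr d ≠ x)
    (h₄ : .inl (.inl d.snd) ≠ x) :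
    ((withPathsAlong Γ H).induce {w | w ≠ x}).Reachable ⟨_, h₁⟩ ⟨_, h₄⟩ :=
  ((Adj.reachable_induce_ne (by simp [withPathsAlong]) h₁ h₂).trans
    (Adj.reachable_induce_ne (by simp [withPathsAlong]) h₂ h₃)).trans
    (Adj.reachable_induce_ne (by simp [withPathsAlong]) h₃ h₄)

/-- The path along `(a, b)` or, if `x` lies on it, the path along `(b, a)`. -/
lemma reachable_withPathsAlong_induce_ne_of_adj {a b : U} (hab : H.Adj a b)
    (ha : .inl (.inl a) ≠ x) (hb : .inl (.inl b) ≠ x) :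
    ((withPathsAlong Γ H).induce {w | w ≠ x}).Reachable ⟨_, ha⟩ ⟨_, hb⟩ := by
  let d : H.Dart := ⟨(a, b), hab⟩
  by_cases hd : .inl (.inr d) ≠ x ∧ .inr d ≠ x
  · exact reachable_withPathsAlong_induce_ne d ha hd.1 hd.2 hb
  · have hd' : .inl (.inr d.symm) ≠ x ∧ .inr d.symm ≠ x := by
      rw [not_and_or, not_not, not_not] at hd
      rcases hd with h | h <;> rw [← h] <;> simp [d.symm_ne]
    exact (reachable_withPathsAlong_induce_ne d.symm hb hd'.1 hd'.2 ha).symm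

lemma exists_reachable_withPathsAlong_induce_ne (w : (U ⊕ H.Dart) ⊕ H.Dart) (hw : w ≠ x) :
    ∃ (u : U) (hu : .inl (.inl u) ≠ x),
      ((withPathsAlong Γ H).induce {w | w ≠ x}).Reachable ⟨w, hw⟩ ⟨_, hu⟩ := by
  rcases w with (u | d) | d
  · exact ⟨u, hw, .rfl⟩
  · by_cases h : .inl (.inl d.fst) ≠ x
    · exact ⟨d.fst, h, Adj.reachable_induce_ne (by simp [withPathsAlong]) _ _⟩
    rw [not_not] at h
    have h₃ : .inr d ≠ x := h ▸ by simp
    have h₄ : .inl (.inl d.snd) ≠ x := h ▸ by simp [d.adj.ne.symm]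
    exact ⟨d.snd, h₄, (Adj.reachable_induce_ne (by simp [withPathsAlong]) hw h₃).trans
      (Adj.reachable_induce_ne (by simp [withPathsAlong]) h₃ h₄)⟩
  · by_cases h : .inl (.inl d.snd) ≠ x
    · exact ⟨d.snd, h, Adj.reachable_induce_ne (by simp [withPathsAlong]) _ _⟩
    rw [not_not] at h
    have h₂ : .inl (.inr d) ≠ x := h ▸ by simp
    have h₁ : .inl (.inl d.fst) ≠ x := h ▸ by simp [d.adj.ne]
    exact ⟨d.fst, h₁, (Adj.reachable_induce_ne (by simp [withPathsAlong]) hw h₂).trans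
      (Adj.reachable_induce_ne (by simp [withPathsAlong]) h₂ h₁)⟩

lemma withPathsAlong_induce_ne_connected (hconn : H.Connected)
    (hdel : ∀ u, (H.induce {w | w ≠ u}).Connected) (x : (U ⊕ H.Dart) ⊕ H.Dart) :
    ((withPathsAlong Γ H).induce {w | w ≠ x}).Connected := by
  have hH : (H.induce {u | .inl (.inl u) ≠ x}).Connected := by
    rcases x with (u | d) | d
    · convert hdel u using 2 <;> ext <;> simp
    all_goals convert (induceUnivIso H).connected_iff.mpr hconn using 2 <;> ext <;> simp
  let old (u : {u | .inl (.inl u) ≠ x}) : {w | w ≠ x} := ⟨_, u.2⟩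
  obtain ⟨u₀⟩ := hH.nonempty
  refine (connected_iff_exists_forall_reachable _).mpr ⟨old u₀, fun ⟨w, hw⟩ => ?_⟩
  obtain ⟨u, hu, hwu⟩ := exists_reachable_withPathsAlong_induce_ne (Γ := Γ) w hw
  have hold : ((withPathsAlong Γ H).induce {w | w ≠ x}).Reachable (old u₀) (old ⟨u, hu⟩) :=
    (hH.preconnected u₀ ⟨u, hu⟩).lift old fun a b hab =>
      reachable_withPathsAlong_induce_ne_of_adj (a := a.1) (b := b.1) hab a.2 b.2
  exact hold.trans hwu.symm

lemma mem_range_withPathsAlongEmbedding_of_triangle {a b c : (U ⊕ H.Dart) ⊕ H.Dart} (hab : (withPathsAlong Γ H).Adj a b)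
    (hbc : (withPathsAlong Γ H).Adj b c) (hac : (withPathsAlong Γ H).Adj a c) :
    a ∈ Set.range (withPathsAlongEmbedding Γ H) := by
  rcases a with (a | d) | d <;> rcases b with (b | e) | e <;> rcases c with (c | f) | f <;>
    simp [withPathsAlong, withPathsAlongEmbedding, attachEmbedding] at * <;> aesop

end withPathsAlong

end SimpleGraph

open SimpleGraph

section

variable {V V' : Type} {G : SimpleGraph V} {G' : SimpleGraph V'}

section TwoTree

lemma IsTwoTree.attach {β : Type} [Finite β] {N : β → Set V} (hG : IsTwoTree G)
    (hN : ∀ b, ∃ c d, G.Adj c d ∧ N b = {c, d}) : IsTwoTree (G.attach N) := by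
  obtain ⟨n, e, hn, hbase, hstep⟩ := hG
  let E := finSumFinEquiv.symm.trans (e.sumCongr (Finite.equivFin β).symm)
  have hE_old (i : Fin n) : E (Fin.castAdd _ i) = .inl (e i) := by simp [E]
  have hE_new (i : Fin (Nat.card β)) : E (Fin.natAdd n i) = .inr ((Finite.equivFin β).symm i) := by
    simp [E]
  refine ⟨n + Nat.card β, E, by omega, ?_, ?_⟩
  · intro i j hi hj
    cases i using Fin.addCases <;> cases j using Fin.addCases <;>
      simp only [Fin.val_castAdd, Fin.val_natAdd] at hi hj
    · simpa [hE_old] using hbase _ _ hi hj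
    all_goals omega
  · intro j hj
    cases j using Fin.addCases with
    | left j =>
      obtain ⟨a, b, ha, hb, hab, hiff⟩ := hstep j (by simpa using hj)
      refine ⟨Fin.castAdd _ a, Fin.castAdd _ b, by simpa, by simpa, by simpa [hE_old], ?_⟩
      intro i hi
      cases i using Fin.addCases with
      | left i => simpa [hE_old] using hiff i (by simpa using hi)
      | right i => simp only [Fin.val_natAdd, Fin.val_castAdd] at hi; omega
    | right b =>
      obtain ⟨c, d, hcd, hb⟩ := hN ((Finite.equivFin β).symm b)
      have hlt (a : V) : (Fin.castAdd (Nat.card β) (e.symm a) : ℕ) < Fin.natAdd n b := by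
        simp only [Fin.val_castAdd, Fin.val_natAdd]; omega
      refine ⟨Fin.castAdd _ (e.symm c), Fin.castAdd _ (e.symm d), hlt c, hlt d, by simpa [hE_old], ?_⟩
      intro i hi
      cases i using Fin.addCases with
      | left i => simp [hE_old, hE_new, hb, Equiv.eq_symm_apply]
      | right i =>
        simp only [hE_new, not_attach_adj_inr_inr, false_iff, not_or, Fin.ext_iff, Fin.val_natAdd,
          Fin.val_castAdd]
        omega

lemma IsTwoTree.isPartialTwoTree (hG : IsTwoTree G) : IsPartialTwoTree G := by
  obtain ⟨n, e, hn, hbase, hstep⟩ := hG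
  exact ⟨n, G.comap e, ⟨n, .refl _, hn, hbase, hstep⟩, e.symm, e.symm.injective,
    fun u v huv => by simpa using huv⟩

lemma IsPartialTwoTree.of_copy (hG' : IsPartialTwoTree G') (c : Copy G G') :
    IsPartialTwoTree G := by
  obtain ⟨m, H, hH, f, hf, hhom⟩ := hG'
  exact ⟨m, H, hH, f ∘ c.toHom, hf.comp c.injective, fun u v huv => hhom _ _ (c.toHom.map_adj huv)⟩

lemma IsTwoTree.isPartialTwoTree_withPathsAlong [Finite V] {H : SimpleGraph V} (hH : IsTwoTree H)
    (hG : G ≤ H) : IsPartialTwoTree (withPathsAlong G H) := by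
  have : Finite H.Dart := .of_injective _ Dart.toProd_injective
  have hT := (hH.attach fun d : H.Dart => ⟨_, _, d.adj, rfl⟩).attach
    fun d : H.Dart => ⟨.inr d, .inl d.snd, by simp, rfl⟩
  exact hT.isPartialTwoTree.of_copy
    (Copy.ofLE _ _ (attach_mono (attach_mono hG fun _ => by simp) fun _ => le_rfl))

lemma IsTwoTree.induce_ne_connected (hG : IsTwoTree G) (x : V) :
    (G.induce {u | u ≠ x}).Connected := by
  obtain ⟨n, e, hn, hbase, hstep⟩ := hG
  have h01 : G.Adj (e ⟨0, by omega⟩) (e ⟨1, by omega⟩) := hbase _ _ rfl rfl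
  have hbase_reach (i j : Fin n) (hi : (i : ℕ) < 2) (hj : (j : ℕ) < 2) (hix : e i ≠ x)
      (hjx : e j ≠ x) : (G.induce {u | u ≠ x}).Reachable ⟨e i, hix⟩ ⟨e j, hjx⟩ := by
    obtain ⟨i, hi'⟩ := i
    obtain ⟨j, hj'⟩ := j
    interval_cases i <;> interval_cases j
    exacts [.rfl, h01.reachable_induce_ne _ _, h01.symm.reachable_induce_ne _ _, .rfl]
  obtain ⟨r, hr2, hrx⟩ : ∃ r : Fin n, (r : ℕ) < 2 ∧ e r ≠ x := by
    by_cases h0 : e ⟨0, by omega⟩ = x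
    · exact ⟨⟨1, by omega⟩, by simp, fun h1 => h01.ne (h0.trans h1.symm)⟩
    · exact ⟨⟨0, by omega⟩, by simp, h0⟩
  have hreach (j : Fin n) (hjx : e j ≠ x) :
      (G.induce {u | u ≠ x}).Reachable ⟨e j, hjx⟩ ⟨e r, hrx⟩ := by
    induction j using WellFoundedLT.induction with
    | ind j ih =>
      by_cases hj2 : 2 ≤ (j : ℕ)
      · obtain ⟨a, b, ha, hb, hab, hiff⟩ := hstep j hj2
        obtain ⟨c, hc, hcx⟩ : ∃ c, c < j ∧ (c = a ∨ c = b) ∧ e c ≠ x := by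
          by_cases hax : e a = x
          · exact ⟨b, hb, .inr rfl, fun hbx => hab.ne (hax.trans hbx.symm)⟩
          · exact ⟨a, ha, .inl rfl, hax⟩
        exact (((hiff c hc).mpr hcx.1).symm.reachable_induce_ne _ _).trans (ih c hc hcx.2)
      · exact hbase_reach _ _ (by omega) hr2 _ _
  refine (connected_iff_exists_forall_reachable _).mpr ⟨⟨e r, hrx⟩, ?_⟩
  rintro ⟨u, hu⟩
  obtain ⟨j, rfl⟩ := e.surjective u
  exact (hreach j hu).symm

end TwoTree

section TwoConnected

variable [Fintype V] [Fintype V']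

lemma IsTwoTree.twoConnected (hG : IsTwoTree G) : TwoConnected G := by
  have hdel := hG.induce_ne_connected
  obtain ⟨n, e, hn, hbase, -⟩ := hG
  exact ⟨by simpa [Fintype.card_congr e.symm] using hn,
    (hdel _).of_induce_ne (hbase ⟨0, by omega⟩ ⟨1, by omega⟩ rfl rfl), hdel⟩

lemma TwoConnected.of_iso (hG : TwoConnected G) (φ : G ≃g G') : TwoConnected G' := by
  obtain ⟨hcard, hconn, hdel⟩ := hG
  refine ⟨Fintype.card_congr φ.toEquiv ▸ hcard, φ.connected_iff.mp hconn, fun v => ?_⟩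
  obtain ⟨u, rfl⟩ := φ.surjective v
  let ψ : G.induce {w | w ≠ u} ≃g G'.induce {w | w ≠ φ u} :=
    { Equiv.subtypeEquiv (p := (· ≠ u)) (q := (· ≠ φ u)) φ.toEquiv
        fun _ => φ.injective.ne_iff.symm with
      map_rel_iff' := φ.map_adj_iff }
  exact ψ.connected_iff.mp (hdel u)

lemma TwoConnected.withPathsAlong [DecidableRel G.Adj] {Γ : SimpleGraph V} (hG : TwoConnected G) :
    TwoConnected (withPathsAlong Γ G) := by
  obtain ⟨hcard, hconn, hdel⟩ := hG
  have : Nontrivial V := Fintype.one_lt_card_iff_nontrivial.mp hcard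
  obtain ⟨u⟩ := hconn.nonempty
  obtain ⟨v, huv⟩ := hconn.preconnected.exists_adj_of_nontrivial u
  have hdel' := withPathsAlong_induce_ne_connected (Γ := Γ) hconn hdel
  have hs : (SimpleGraph.withPathsAlong Γ G).Adj (.inl (.inr ⟨(u, v), huv⟩)) (.inl (.inl u)) := by
    simp [SimpleGraph.withPathsAlong]
  refine ⟨?_, (hdel' _).of_induce_ne hs, hdel'⟩
  simp only [Fintype.card_sum]
  omega

end TwoConnected

section K113

lemma K113_exists_triangle (k : Fin 5) : ∃ u v, K113.Adj k u ∧ K113.Adj k v ∧ K113.Adj u v := by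
  revert k
  unfold K113
  decide

lemma K113Free.of_copy (hG' : K113Free G') (c : Copy G G') : K113Free G :=
  fun ⟨φ, hφ, hadj⟩ =>
    hG' ⟨c ∘ φ, c.injective.comp hφ, fun u v huv => c.toHom.map_adj (hadj u v huv)⟩

/-- Every vertex of `K_{1,1,3}` lies on a triangle, so a copy of it in `G'` lies in the
range of `ι`. -/
lemma K113Free.of_embedding (hG : K113Free G) (ι : G ↪g G')
    (htri : ∀ a b c, G'.Adj a b → G'.Adj b c → G'.Adj a c → a ∈ Set.range ι) : K113Free G' := by
  rintro ⟨φ, hφ, hadj⟩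
  have hmem (k : Fin 5) : φ k ∈ Set.range ι := by
    obtain ⟨u, v, hku, hkv, huv⟩ := K113_exists_triangle k
    exact htri _ _ _ (hadj _ _ hku) (hadj _ _ huv) (hadj _ _ hkv)
  choose ψ hψ using hmem
  refine hG ⟨ψ, fun k l h => hφ (by rw [← hψ, ← hψ, h]), fun u v huv => ?_⟩
  rw [← ι.map_adj_iff, hψ, hψ]
  exact hadj u v huv

lemma K113Free.map (hG : K113Free G) (f : V ↪ V') : K113Free (G.map f) :=
  hG.of_embedding (Embedding.map f G) fun _ _ _ ⟨_, u, _, _, hu, _⟩ _ _ => ⟨u, hu⟩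

lemma K113Free.withPathsAlong {H : SimpleGraph V} (hG : K113Free G) :
    K113Free (withPathsAlong G H) :=
  hG.of_embedding _ fun _ _ _ => mem_range_withPathsAlongEmbedding_of_triangle

end K113

lemma HasSCR.of_embedding (ι : G ↪g G') (hG' : HasSCR G') : HasSCR G := by
  obtain ⟨Sq, hdisj, hadj, hnadj⟩ := hG'
  refine ⟨Sq ∘ ι, fun u _ v _ huv => ?_, fun u _ v _ huv => ?_, fun u _ v _ huv hn => ?_⟩
  · exact hdisj _ trivial _ trivial (ι.injective.ne huv)
  · exact hadj _ trivial _ trivial (ι.map_adj_iff.mpr huv)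
  · exact hnadj _ trivial _ trivial (ι.injective.ne huv) (mt ι.map_adj_iff.mp hn)

end

theorem exists_seriesParallel_supergraph_general {V : Type}
    (G : SimpleGraph V) (hpt : IsPartialTwoTree G)
    (hfree : K113Free G) :
    ∃ (m : ℕ) (Gstar : SimpleGraph (Fin m)) (f : V → Fin m),
      Function.Injective f ∧
      (∀ u v : V, G.Adj u v ↔ Gstar.Adj (f u) (f v)) ∧
      IsSeriesParallel Gstar ∧ K113Free Gstar ∧
      (HasSCR Gstar → HasSCR G) := by
  classical
  obtain ⟨m, H, hH, f, hf, hhom⟩ := hpt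
  let f' : V ↪ Fin m := ⟨f, hf⟩
  let Δ := withPathsAlong (G.map f') H
  let φ := Iso.map (Fintype.equivFin _) Δ
  let ι : G ↪g Δ.map _ :=
    φ.toEmbedding.comp ((withPathsAlongEmbedding _ H).comp (Embedding.map f' G))
  have hGH : G.map f' ≤ H := (map_le_iff_le_comap _ _ _).mpr hhom
  refine ⟨_, _, ι, ι.injective, fun u v => ι.map_adj_iff.symm, ⟨?_, ?_⟩, ?_, .of_embedding ι⟩
  · exact hH.twoConnected.withPathsAlong.of_iso φ
  · exact (hH.isPartialTwoTree_withPathsAlong hGH).of_copy φ.symm.toCopy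
  · exact (hfree.map f').withPathsAlong.of_copy φ.symm.toCopy

/-- Lemma 1: every finite connected `K_{1,1,3}`-free partial 2-tree
`G` is an induced subgraph of some finite `K_{1,1,3}`-free series-parallel graph `G*`;
consequently, if `G*` admits a proper square-contact representation then so does `G`. -/
theorem exists_seriesParallel_supergraph {V : Type} [Fintype V]
    (G : SimpleGraph V) (hconn : G.Connected) (hpt : IsPartialTwoTree G)
    (hfree : K113Free G) :
    ∃ (m : ℕ) (Gstar : SimpleGraph (Fin m)) (f : V → Fin m),
      Function.Injective f ∧
      (∀ u v : V, G.Adj u v ↔ Gstar.Adj (f u) (f v)) ∧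
      IsSeriesParallel Gstar ∧ K113Free Gstar ∧
      (HasSCR Gstar → HasSCR G) :=
  exists_seriesParallel_supergraph_general G hpt hfree
end

section
/- The graph K_{1,1,3} admits no proper square-contact representation. -/
open Set

/-!
If `A` and `B` touch, they meet along a side; after transposing and swapping them we may
assume `A.right = B.left = c`. A square touching both meets the line `x = c`, so three pairwise
disjoint such squares are stacked vertically. The middle one lies strictly within the vertical
extent of `A` and of `B`, hence touches each of them along a vertical side, which is impossible
since it meets the line `x = c` and `A`, `B` lie on opposite sides of it.
-/

theorem Set.Icc_disjoint_Icc {α : Type*} [LinearOrder α] {a₁ a₂ b₁ b₂ : α} :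
    Disjoint (Icc a₁ a₂) (Icc b₁ b₂) ↔ min a₂ b₂ < max a₁ b₁ := by
  simp_rw [Set.disjoint_iff_inter_eq_empty, Icc_inter_Icc, Icc_eq_empty_iff, not_le]

theorem exists_rel_rel_of_total_fin_three (r : Fin 3 → Fin 3 → Prop)
    (hr : ∀ i j, i ≠ j → r i j ∨ r j i) : ∃ i j k, r i j ∧ r j k := by
  rcases hr 0 1 (by decide) with h01 | h10 <;> rcases hr 1 2 (by decide) with h12 | h21 <;>
    rcases hr 0 2 (by decide) with h02 | h20
  all_goals first
    | exact ⟨0, 1, 2, h01, h12⟩ | exact ⟨2, 1, 0, h21, h10⟩ | exact ⟨1, 0, 2, h10, h02⟩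
    | exact ⟨2, 0, 1, h20, h01⟩ | exact ⟨0, 2, 1, h02, h21⟩ | exact ⟨1, 2, 0, h12, h20⟩

namespace AxSquare

variable {S T : AxSquare}

theorem left_lt_right (S : AxSquare) : S.left < S.right :=
  lt_add_of_pos_right _ S.side_pos

theorem bottom_lt_top (S : AxSquare) : S.bottom < S.top :=
  lt_add_of_pos_right _ S.side_pos

theorem toSet_eq (S : AxSquare) : S.toSet = Icc S.left S.right ×ˢ Icc S.bottom S.top := rfl

theorem disjoint_toSet_iff : Disjoint S.toSet T.toSet ↔
    (T.right < S.left ∨ S.right < T.left) ∨ (T.top < S.bottom ∨ S.top < T.bottom) := by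
  rw [toSet_eq, toSet_eq, disjoint_prod, Icc_disjoint_Icc, Icc_disjoint_Icc]
  simp only [min_lt_iff, lt_max_iff, S.left_lt_right.not_gt, T.left_lt_right.not_gt,
    S.bottom_lt_top.not_gt, T.bottom_lt_top.not_gt, false_or, or_false]

theorem disjoint_interior_toSet_iff : Disjoint (interior S.toSet) (interior T.toSet) ↔
    (T.right ≤ S.left ∨ S.right ≤ T.left) ∨ (T.top ≤ S.bottom ∨ S.top ≤ T.bottom) := by
  rw [toSet_eq, toSet_eq, interior_prod_eq, interior_prod_eq, interior_Icc, interior_Icc,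
    interior_Icc, interior_Icc, disjoint_prod, Ioo_disjoint_Ioo, Ioo_disjoint_Ioo]
  simp only [min_le_iff, le_max_iff, S.left_lt_right.not_ge, T.left_lt_right.not_ge,
    S.bottom_lt_top.not_ge, T.bottom_lt_top.not_ge, false_or, or_false]

def Touches (S T : AxSquare) : Prop :=
  ¬ Disjoint S.toSet T.toSet ∧ Disjoint (interior S.toSet) (interior T.toSet)

theorem Touches.symm (h : Touches S T) : Touches T S :=
  ⟨fun h' => h.1 h'.symm, h.2.symm⟩

theorem Touches.left_le_right (h : Touches S T) : S.left ≤ T.right :=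
  not_lt.1 fun h' => h.1 (disjoint_toSet_iff.2 (Or.inl (Or.inl h')))

theorem Touches.bottom_le_top (h : Touches S T) : S.bottom ≤ T.top :=
  not_lt.1 fun h' => h.1 (disjoint_toSet_iff.2 (Or.inr (Or.inl h')))

theorem Touches.right_eq_left_or_of_lt (h : Touches S T) (h₁ : S.bottom < T.top)
    (h₂ : T.bottom < S.top) : S.right = T.left ∨ T.right = S.left := by
  have hST := h.left_le_right
  have hTS := h.symm.left_le_right
  rcases disjoint_interior_toSet_iff.1 h.2 with (h' | h') | (h' | h')
  · exact Or.inr (le_antisymm h' hST)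
  · exact Or.inl (le_antisymm h' hTS)
  all_goals linarith

theorem Touches.right_eq_left_or_top_eq_bottom (h : Touches S T) :
    (S.right = T.left ∨ T.right = S.left) ∨ (S.top = T.bottom ∨ T.top = S.bottom) := by
  have := h.left_le_right; have := h.symm.left_le_right
  have := h.bottom_le_top; have := h.symm.bottom_le_top
  rcases disjoint_interior_toSet_iff.1 h.2 with (h' | h') | (h' | h')
  · exact Or.inl (Or.inr (by linarith))
  · exact Or.inl (Or.inl (by linarith))
  · exact Or.inr (Or.inr (by linarith))
  · exact Or.inr (Or.inl (by linarith))

def transpose (S : AxSquare) : AxSquare := ⟨S.y, S.x, S.side, S.side_pos⟩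

@[simp] theorem transpose_left : S.transpose.left = S.bottom := rfl
@[simp] theorem transpose_right : S.transpose.right = S.top := rfl
@[simp] theorem transpose_bottom : S.transpose.bottom = S.left := rfl
@[simp] theorem transpose_top : S.transpose.top = S.right := rfl

theorem disjoint_toSet_transpose (h : Disjoint S.toSet T.toSet) :
    Disjoint S.transpose.toSet T.transpose.toSet := by
  rw [disjoint_toSet_iff] at h ⊢
  simpa only [transpose_left, transpose_right, transpose_bottom, transpose_top] using h.symm

theorem Touches.transpose (h : Touches S T) : Touches S.transpose T.transpose := by
  refine ⟨fun h' => h.1 ?_, ?_⟩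
  · simpa only [disjoint_toSet_iff, transpose_left, transpose_right, transpose_bottom,
      transpose_top, or_comm] using h'
  · have := h.2
    rw [disjoint_interior_toSet_iff] at this ⊢
    simpa only [transpose_left, transpose_right, transpose_bottom, transpose_top] using this.symm

theorem top_lt_bottom_or_of_disjoint {c : ℝ} (h : Disjoint S.toSet T.toSet)
    (hS : c ∈ Icc S.left S.right) (hT : c ∈ Icc T.left T.right) :
    S.top < T.bottom ∨ T.top < S.bottom := by
  rcases disjoint_toSet_iff.1 h with (h' | h') | h'
  · linarith [hS.1, hT.2]
  · linarith [hS.2, hT.1]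
  · exact h'.symm

theorem not_pairwise_disjoint_of_right_eq_left {A B : AxSquare} {C : Fin 3 → AxSquare}
    (hAB : A.right = B.left) (hA : ∀ i, Touches A (C i)) (hB : ∀ i, Touches B (C i)) :
    ¬ Pairwise fun i j => Disjoint (C i).toSet (C j).toSet := by
  intro hC
  have hmem (i : Fin 3) : A.right ∈ Icc (C i).left (C i).right :=
    ⟨(hA i).symm.left_le_right, hAB ▸ (hB i).left_le_right⟩
  obtain ⟨p, m, q, hpm, hmq⟩ := exists_rel_rel_of_total_fin_three
    (fun i j => (C i).top < (C j).bottom)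
    (fun i j hij => top_lt_bottom_or_of_disjoint (hC hij) (hmem i) (hmem j))
  have := (C m).bottom_lt_top
  have hAm := (hA m).right_eq_left_or_of_lt (by linarith [(hA p).bottom_le_top])
    (by linarith [(hA q).symm.bottom_le_top])
  have hBm := (hB m).right_eq_left_or_of_lt (by linarith [(hB p).bottom_le_top])
    (by linarith [(hB q).symm.bottom_le_top])
  have := A.left_lt_right; have := B.left_lt_right; have := (C m).left_lt_right
  rcases hAm with hAm | hAm <;> rcases hBm with hBm | hBm <;> linarith

theorem not_pairwise_disjoint_of_touches {A B : AxSquare} {C : Fin 3 → AxSquare}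
    (hAB : Touches A B) (hA : ∀ i, Touches A (C i)) (hB : ∀ i, Touches B (C i)) :
    ¬ Pairwise fun i j => Disjoint (C i).toSet (C j).toSet := by
  intro hC
  have hCt : Pairwise fun i j => Disjoint (C i).transpose.toSet (C j).transpose.toSet :=
    fun i j hij => disjoint_toSet_transpose (hC hij)
  rcases hAB.right_eq_left_or_top_eq_bottom with (h | h) | (h | h)
  · exact not_pairwise_disjoint_of_right_eq_left h hA hB hC
  · exact not_pairwise_disjoint_of_right_eq_left h hB hA hC
  · exact not_pairwise_disjoint_of_right_eq_left (A := A.transpose) (B := B.transpose) h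
      (fun i => (hA i).transpose) (fun i => (hB i).transpose) hCt
  · exact not_pairwise_disjoint_of_right_eq_left (A := B.transpose) (B := A.transpose) h
      (fun i => (hB i).transpose) (fun i => (hA i).transpose) hCt

end AxSquare

/-- `K_{1,1,3}` admits no proper square-contact representation. -/
theorem K113_not_hasSCR : ¬ HasSCR K113 := by
  rintro ⟨Sq, hinterior, hinfinite, hempty⟩
  have touches (u v : Fin 5) (h : K113.Adj u v) : (Sq u).Touches (Sq v) :=
    ⟨not_disjoint_iff_nonempty_inter.2 (hinfinite u trivial v trivial h).nonempty,
      disjoint_iff_inter_eq_empty.2 (hinterior u trivial v trivial h.1)⟩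
  have touches_succ_succ (u : Fin 5) (hu : (u : ℕ) < 2) (i : Fin 3) :
      (Sq u).Touches (Sq i.succ.succ) :=
    touches _ _ ⟨fun h => by simp [h] at hu, Or.inl hu⟩
  have disjoint_succ_succ :
      Pairwise fun i j : Fin 3 => Disjoint (Sq i.succ.succ).toSet (Sq j.succ.succ).toSet :=
    fun i j hij => disjoint_iff_inter_eq_empty.2 <| hempty _ trivial _ trivial
      (fun h => hij (Fin.succ_injective _ (Fin.succ_injective _ h)))
      (fun h => by rcases h.2 with h | h <;> simp at h)
  exact AxSquare.not_pairwise_disjoint_of_touches (touches 0 1 ⟨by decide, by decide⟩)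
    (touches_succ_succ 0 (by decide)) (touches_succ_succ 1 (by decide)) disjoint_succ_succ
end

section
/- Let S₁, S₂, S₃ be axis-aligned squares in ℝ × ℝ whose interiors are pairwise disjoint and such that for each pair i ≠ j the intersection Sᵢ ∩ Sⱼ is either empty or an infinite set. Then the complement (ℝ × ℝ) \ (S₁ ∪ S₂ ∪ S₃) is a connected set; in particular, three properly-touching squares cannot surround a nonzero-area region of the plane. -/
open Set

namespace ThreeSquaresAux

lemma mem_square {S : AxSquare} {q : ℝ × ℝ} :
    q ∈ S.toSet ↔ (S.x ≤ q.1 ∧ q.1 ≤ S.x + S.side) ∧ (S.y ≤ q.2 ∧ q.2 ≤ S.y + S.side) := by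
  simp only [AxSquare.toSet, Set.mem_prod, Set.mem_Icc]

def rayR (p : ℝ × ℝ) : Set (ℝ × ℝ) := {q | p.1 ≤ q.1 ∧ q.2 = p.2}
def rayL (p : ℝ × ℝ) : Set (ℝ × ℝ) := {q | q.1 ≤ p.1 ∧ q.2 = p.2}
def rayU (p : ℝ × ℝ) : Set (ℝ × ℝ) := {q | q.1 = p.1 ∧ p.2 ≤ q.2}
def rayD (p : ℝ × ℝ) : Set (ℝ × ℝ) := {q | q.1 = p.1 ∧ q.2 ≤ p.2}

lemma rayR_conn (p : ℝ × ℝ) : IsConnected (rayR p) := by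
  have : rayR p = Ici p.1 ×ˢ ({p.2} : Set ℝ) := by
    ext q; simp only [rayR, Set.mem_prod, Set.mem_Ici, Set.mem_Iic, Set.mem_singleton_iff, Set.mem_setOf_eq]
  rw [this]; exact isConnected_Ici.prod isConnected_singleton

lemma rayL_conn (p : ℝ × ℝ) : IsConnected (rayL p) := by
  have : rayL p = Iic p.1 ×ˢ ({p.2} : Set ℝ) := by
    ext q; simp only [rayL, Set.mem_prod, Set.mem_Ici, Set.mem_Iic, Set.mem_singleton_iff, Set.mem_setOf_eq]
  rw [this]; exact isConnected_Iic.prod isConnected_singleton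

lemma rayU_conn (p : ℝ × ℝ) : IsConnected (rayU p) := by
  have : rayU p = ({p.1} : Set ℝ) ×ˢ Ici p.2 := by
    ext q; simp only [rayU, Set.mem_prod, Set.mem_Ici, Set.mem_Iic, Set.mem_singleton_iff, Set.mem_setOf_eq]
  rw [this]; exact isConnected_singleton.prod isConnected_Ici

lemma rayD_conn (p : ℝ × ℝ) : IsConnected (rayD p) := by
  have : rayD p = ({p.1} : Set ℝ) ×ˢ Iic p.2 := by
    ext q; simp only [rayD, Set.mem_prod, Set.mem_Ici, Set.mem_Iic, Set.mem_singleton_iff, Set.mem_setOf_eq]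
  rw [this]; exact isConnected_singleton.prod isConnected_Iic

lemma pairRL {S : AxSquare} {p : ℝ × ℝ} (hR : (rayR p ∩ S.toSet).Nonempty)
    (hL : (rayL p ∩ S.toSet).Nonempty) : p ∈ S.toSet := by
  obtain ⟨q, ⟨hq1, hq2⟩, hqS⟩ := hR
  obtain ⟨r, ⟨hr1, hr2⟩, hrS⟩ := hL
  rw [mem_square] at hqS hrS ⊢
  obtain ⟨⟨a1, a2⟩, a3, a4⟩ := hqS; obtain ⟨⟨b1, b2⟩, b3, b4⟩ := hrS
  exact ⟨⟨by linarith, by linarith⟩, by linarith, by linarith⟩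

lemma pairRU {S : AxSquare} {p : ℝ × ℝ} (hR : (rayR p ∩ S.toSet).Nonempty)
    (hU : (rayU p ∩ S.toSet).Nonempty) : p ∈ S.toSet := by
  obtain ⟨q, ⟨hq1, hq2⟩, hqS⟩ := hR
  obtain ⟨r, ⟨hr1, hr2⟩, hrS⟩ := hU
  rw [mem_square] at hqS hrS ⊢
  obtain ⟨⟨a1, a2⟩, a3, a4⟩ := hqS; obtain ⟨⟨b1, b2⟩, b3, b4⟩ := hrS
  exact ⟨⟨by linarith, by linarith⟩, by linarith, by linarith⟩

lemma pairRD {S : AxSquare} {p : ℝ × ℝ} (hR : (rayR p ∩ S.toSet).Nonempty)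
    (hD : (rayD p ∩ S.toSet).Nonempty) : p ∈ S.toSet := by
  obtain ⟨q, ⟨hq1, hq2⟩, hqS⟩ := hR
  obtain ⟨r, ⟨hr1, hr2⟩, hrS⟩ := hD
  rw [mem_square] at hqS hrS ⊢
  obtain ⟨⟨a1, a2⟩, a3, a4⟩ := hqS; obtain ⟨⟨b1, b2⟩, b3, b4⟩ := hrS
  exact ⟨⟨by linarith, by linarith⟩, by linarith, by linarith⟩

lemma pairLU {S : AxSquare} {p : ℝ × ℝ} (hL : (rayL p ∩ S.toSet).Nonempty)
    (hU : (rayU p ∩ S.toSet).Nonempty) : p ∈ S.toSet := by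
  obtain ⟨q, ⟨hq1, hq2⟩, hqS⟩ := hL
  obtain ⟨r, ⟨hr1, hr2⟩, hrS⟩ := hU
  rw [mem_square] at hqS hrS ⊢
  obtain ⟨⟨a1, a2⟩, a3, a4⟩ := hqS; obtain ⟨⟨b1, b2⟩, b3, b4⟩ := hrS
  exact ⟨⟨by linarith, by linarith⟩, by linarith, by linarith⟩

lemma pairLD {S : AxSquare} {p : ℝ × ℝ} (hL : (rayL p ∩ S.toSet).Nonempty)
    (hD : (rayD p ∩ S.toSet).Nonempty) : p ∈ S.toSet := by
  obtain ⟨q, ⟨hq1, hq2⟩, hqS⟩ := hL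
  obtain ⟨r, ⟨hr1, hr2⟩, hrS⟩ := hD
  rw [mem_square] at hqS hrS ⊢
  obtain ⟨⟨a1, a2⟩, a3, a4⟩ := hqS; obtain ⟨⟨b1, b2⟩, b3, b4⟩ := hrS
  exact ⟨⟨by linarith, by linarith⟩, by linarith, by linarith⟩

lemma pairUD {S : AxSquare} {p : ℝ × ℝ} (hU : (rayU p ∩ S.toSet).Nonempty)
    (hD : (rayD p ∩ S.toSet).Nonempty) : p ∈ S.toSet := by
  obtain ⟨q, ⟨hq1, hq2⟩, hqS⟩ := hU
  obtain ⟨r, ⟨hr1, hr2⟩, hrS⟩ := hD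
  rw [mem_square] at hqS hrS ⊢
  obtain ⟨⟨a1, a2⟩, a3, a4⟩ := hqS; obtain ⟨⟨b1, b2⟩, b3, b4⟩ := hrS
  exact ⟨⟨by linarith, by linarith⟩, by linarith, by linarith⟩

lemma three_nonempty {α : Type*} {a b c : Set α} (h : ¬(a = ∅ ∧ b = ∅ ∧ c = ∅)) :
    a.Nonempty ∨ b.Nonempty ∨ c.Nonempty := by
  by_contra h'
  push_neg at h'
  exact h h'

end ThreeSquaresAux

/-- three axis-aligned squares with pairwise disjoint interiors, any
two of which intersect either in the empty set or in an infinite set, cannot surround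
a nonzero-area region: the complement of their union is a connected set. -/
theorem complement_of_three_squares_connected (S₁ S₂ S₃ : AxSquare)
    (h₁₂ : interior S₁.toSet ∩ interior S₂.toSet = ∅)
    (h₁₃ : interior S₁.toSet ∩ interior S₃.toSet = ∅)
    (h₂₃ : interior S₂.toSet ∩ interior S₃.toSet = ∅)
    (c₁₂ : S₁.toSet ∩ S₂.toSet = ∅ ∨ (S₁.toSet ∩ S₂.toSet).Infinite)
    (c₁₃ : S₁.toSet ∩ S₃.toSet = ∅ ∨ (S₁.toSet ∩ S₃.toSet).Infinite)
    (c₂₃ : S₂.toSet ∩ S₃.toSet = ∅ ∨ (S₂.toSet ∩ S₃.toSet).Infinite) :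
    IsConnected ((S₁.toSet ∪ S₂.toSet ∪ S₃.toSet)ᶜ) := by
  clear h₁₂ h₁₃ h₂₃ c₁₂ c₁₃ c₂₃
  have pos1 := S₁.side_pos
  have pos2 := S₂.side_pos
  have pos3 := S₃.side_pos
  have n1 := abs_nonneg S₁.x; have n2 := abs_nonneg S₁.y
  have n3 := abs_nonneg S₂.x; have n4 := abs_nonneg S₂.y
  have n5 := abs_nonneg S₃.x; have n6 := abs_nonneg S₃.y
  have m1 := neg_abs_le S₁.x; have m2 := neg_abs_le S₁.y
  have m3 := neg_abs_le S₂.x; have m4 := neg_abs_le S₂.y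
  have m5 := neg_abs_le S₃.x; have m6 := neg_abs_le S₃.y
  have l1 := le_abs_self S₁.x; have l2 := le_abs_self S₁.y
  have l3 := le_abs_self S₂.x; have l4 := le_abs_self S₂.y
  have l5 := le_abs_self S₃.x; have l6 := le_abs_self S₃.y
  set M : ℝ := |S₁.x| + |S₁.y| + S₁.side + (|S₂.x| + |S₂.y| + S₂.side) +
      (|S₃.x| + |S₃.y| + S₃.side) + 1 with hMdef
  set U : Set (ℝ × ℝ) := S₁.toSet ∪ S₂.toSet ∪ S₃.toSet with hUdef
  have hb : ∀ q ∈ U, -M < q.1 ∧ q.1 < M ∧ -M < q.2 ∧ q.2 < M := by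
    intro q hq
    rcases hq with (h | h) | h <;> rw [ThreeSquaresAux.mem_square] at h <;>
      obtain ⟨⟨a1, a2⟩, a3, a4⟩ := h <;>
      exact ⟨by linarith, by linarith, by linarith, by linarith⟩
  set A : Set (ℝ × ℝ) := Ici M ×ˢ (univ : Set ℝ) with hAdef
  set B : Set (ℝ × ℝ) := Iic (-M) ×ˢ (univ : Set ℝ) with hBdef
  set C : Set (ℝ × ℝ) := (univ : Set ℝ) ×ˢ Ici M with hCdef
  set D : Set (ℝ × ℝ) := (univ : Set ℝ) ×ˢ Iic (-M) with hDdef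
  set F : Set (ℝ × ℝ) := ((A ∪ C) ∪ B) ∪ D with hFdef
  have hFconn : IsConnected F := by
    have hA : IsConnected A := isConnected_Ici.prod isConnected_univ
    have hB : IsConnected B := isConnected_Iic.prod isConnected_univ
    have hC : IsConnected C := isConnected_univ.prod isConnected_Ici
    have hD : IsConnected D := isConnected_univ.prod isConnected_Iic
    have hAC : IsConnected (A ∪ C) :=
      IsConnected.union ⟨(M, M), ⟨le_refl M, trivial⟩, ⟨trivial, le_refl M⟩⟩ hA hC
    have hACB : IsConnected ((A ∪ C) ∪ B) :=
      IsConnected.union ⟨(-M, M), Or.inr ⟨trivial, le_refl M⟩, ⟨le_refl (-M), trivial⟩⟩ hAC hB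
    exact IsConnected.union
      ⟨(M, -M), Or.inl (Or.inl ⟨le_refl M, trivial⟩), ⟨trivial, le_refl (-M)⟩⟩ hACB hD
  have hFsub : F ⊆ Uᶜ := by
    intro q hq hqU
    obtain ⟨b1, b2, b3, b4⟩ := hb q hqU
    rcases hq with ((h | h) | h) | h
    · exact absurd b2 (not_lt.mpr h.1)
    · exact absurd b4 (not_lt.mpr h.2)
    · exact absurd h.1 (not_le.mpr b1)
    · exact absurd h.2 (not_le.mpr b3)
  have hcF : ((M, M) : ℝ × ℝ) ∈ F := Or.inl (Or.inl (Or.inl ⟨le_refl M, trivial⟩))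
  constructor
  · exact ⟨(M, M), hFsub hcF⟩
  apply isPreconnected_of_forall ((M, M) : ℝ × ℝ)
  intro y hy
  have hp1 : y ∉ S₁.toSet := fun h => hy (Or.inl (Or.inl h))
  have hp2 : y ∉ S₂.toSet := fun h => hy (Or.inl (Or.inr h))
  have hp3 : y ∉ S₃.toSet := fun h => hy (Or.inr h)
  have hfree :
      (ThreeSquaresAux.rayR y ∩ S₁.toSet = ∅ ∧ ThreeSquaresAux.rayR y ∩ S₂.toSet = ∅ ∧
        ThreeSquaresAux.rayR y ∩ S₃.toSet = ∅) ∨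
      (ThreeSquaresAux.rayL y ∩ S₁.toSet = ∅ ∧ ThreeSquaresAux.rayL y ∩ S₂.toSet = ∅ ∧
        ThreeSquaresAux.rayL y ∩ S₃.toSet = ∅) ∨
      (ThreeSquaresAux.rayU y ∩ S₁.toSet = ∅ ∧ ThreeSquaresAux.rayU y ∩ S₂.toSet = ∅ ∧
        ThreeSquaresAux.rayU y ∩ S₃.toSet = ∅) ∨
      (ThreeSquaresAux.rayD y ∩ S₁.toSet = ∅ ∧ ThreeSquaresAux.rayD y ∩ S₂.toSet = ∅ ∧
        ThreeSquaresAux.rayD y ∩ S₃.toSet = ∅) := by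
    by_contra hcon
    rw [not_or, not_or, not_or] at hcon
    obtain ⟨hA', hB', hC', hD'⟩ := hcon
    rcases ThreeSquaresAux.three_nonempty hA' with h0 | h0 | h0 <;>
      rcases ThreeSquaresAux.three_nonempty hB' with h1 | h1 | h1 <;>
        rcases ThreeSquaresAux.three_nonempty hC' with h2 | h2 | h2 <;>
          rcases ThreeSquaresAux.three_nonempty hD' with h3 | h3 | h3 <;>
            first
              | exact hp1 (ThreeSquaresAux.pairRL h0 h1)
              | exact hp2 (ThreeSquaresAux.pairRL h0 h1)
              | exact hp3 (ThreeSquaresAux.pairRL h0 h1)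
              | exact hp1 (ThreeSquaresAux.pairRU h0 h2)
              | exact hp2 (ThreeSquaresAux.pairRU h0 h2)
              | exact hp3 (ThreeSquaresAux.pairRU h0 h2)
              | exact hp1 (ThreeSquaresAux.pairRD h0 h3)
              | exact hp2 (ThreeSquaresAux.pairRD h0 h3)
              | exact hp3 (ThreeSquaresAux.pairRD h0 h3)
              | exact hp1 (ThreeSquaresAux.pairLU h1 h2)
              | exact hp2 (ThreeSquaresAux.pairLU h1 h2)
              | exact hp3 (ThreeSquaresAux.pairLU h1 h2)
              | exact hp1 (ThreeSquaresAux.pairLD h1 h3)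
              | exact hp2 (ThreeSquaresAux.pairLD h1 h3)
              | exact hp3 (ThreeSquaresAux.pairLD h1 h3)
              | exact hp1 (ThreeSquaresAux.pairUD h2 h3)
              | exact hp2 (ThreeSquaresAux.pairUD h2 h3)
              | exact hp3 (ThreeSquaresAux.pairUD h2 h3)
  have subOf : ∀ (r : Set (ℝ × ℝ)), r ∩ S₁.toSet = ∅ → r ∩ S₂.toSet = ∅ →
      r ∩ S₃.toSet = ∅ → r ∪ F ⊆ Uᶜ := by
    intro r e1 e2 e3 q hq
    rcases hq with hq | hq
    · intro hqU
      rcases hqU with (h | h) | h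
      · exact absurd (Set.mem_inter hq h) (by rw [e1]; exact Set.notMem_empty q)
      · exact absurd (Set.mem_inter hq h) (by rw [e2]; exact Set.notMem_empty q)
      · exact absurd (Set.mem_inter hq h) (by rw [e3]; exact Set.notMem_empty q)
    · exact hFsub hq
  rcases hfree with ⟨e1, e2, e3⟩ | ⟨e1, e2, e3⟩ | ⟨e1, e2, e3⟩ | ⟨e1, e2, e3⟩
  · refine ⟨ThreeSquaresAux.rayR y ∪ F, subOf _ e1 e2 e3, Or.inr hcF,
      Or.inl ⟨le_refl _, rfl⟩, ?_⟩
    refine (IsConnected.union ?_ (ThreeSquaresAux.rayR_conn y) hFconn).isPreconnected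
    exact ⟨(max y.1 M, y.2), ⟨le_max_left _ _, rfl⟩,
      Or.inl (Or.inl (Or.inl (Set.mem_prod.mpr ⟨Set.mem_Ici.mpr (le_max_right _ _), Set.mem_univ _⟩)))⟩
  · refine ⟨ThreeSquaresAux.rayL y ∪ F, subOf _ e1 e2 e3, Or.inr hcF,
      Or.inl ⟨le_refl _, rfl⟩, ?_⟩
    refine (IsConnected.union ?_ (ThreeSquaresAux.rayL_conn y) hFconn).isPreconnected
    exact ⟨(min y.1 (-M), y.2), ⟨min_le_left _ _, rfl⟩,
      Or.inl (Or.inr (Set.mem_prod.mpr ⟨Set.mem_Iic.mpr (min_le_right _ _), Set.mem_univ _⟩))⟩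
  · refine ⟨ThreeSquaresAux.rayU y ∪ F, subOf _ e1 e2 e3, Or.inr hcF,
      Or.inl ⟨rfl, le_refl _⟩, ?_⟩
    refine (IsConnected.union ?_ (ThreeSquaresAux.rayU_conn y) hFconn).isPreconnected
    exact ⟨(y.1, max y.2 M), ⟨rfl, le_max_left _ _⟩,
      Or.inl (Or.inl (Or.inr (Set.mem_prod.mpr ⟨Set.mem_univ _, Set.mem_Ici.mpr (le_max_right _ _)⟩)))⟩
  · refine ⟨ThreeSquaresAux.rayD y ∪ F, subOf _ e1 e2 e3, Or.inr hcF,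
      Or.inl ⟨rfl, le_refl _⟩, ?_⟩
    refine (IsConnected.union ?_ (ThreeSquaresAux.rayD_conn y) hFconn).isPreconnected
    exact ⟨(y.1, min y.2 (-M)), ⟨rfl, min_le_left _ _⟩,
      Or.inr (Set.mem_prod.mpr ⟨Set.mem_univ _, Set.mem_Iic.mpr (min_le_right _ _)⟩)⟩
end

section
/- The graph G₉ admits no weak square-contact representation; in particular, it admits no proper square-contact representation. (This is the witness for the paper's Theorem that there exists a 3-connected 3-outerplanar simply-nested graph that does not admit any square-contact representation, even an improper one.) -/
open Set

/-- A weak square-contact representation of `G`, restricted to the vertex set `A`. -/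
def IsWeakSCROn {V : Type} (G : SimpleGraph V) (A : Set V) (Sq : V → AxSquare) : Prop :=
  (∀ u ∈ A, ∀ v ∈ A, u ≠ v → interior (Sq u).toSet ∩ interior (Sq v).toSet = ∅) ∧
  (∀ u ∈ A, ∀ v ∈ A, G.Adj u v → ((Sq u).toSet ∩ (Sq v).toSet).Nonempty) ∧
  (∀ u ∈ A, ∀ v ∈ A, u ≠ v → ¬ G.Adj u v → ((Sq u).toSet ∩ (Sq v).toSet).Subsingleton)

/-- `G` admits a weak square-contact representation. -/
def HasWeakSCR {V : Type} (G : SimpleGraph V) : Prop :=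
  ∃ Sq : V → AxSquare, IsWeakSCROn G Set.univ Sq

/-- Base relation for the graph `G₈`: two nested 4-cycles, with vertex `(false, i)`
the outer vertex `vᵢ` and `(true, i)` the inner vertex `uᵢ`; each inner vertex `uᵢ`
is adjacent to the consecutive outer vertices `vᵢ` and `vᵢ₊₁`. -/
def G8Rel : Bool × ZMod 4 → Bool × ZMod 4 → Prop
  | (false, i), (false, j) => j = i + 1
  | (true, i), (true, j) => j = i + 1
  | (true, i), (false, j) => j = i ∨ j = i + 1
  | (false, _), (true, _) => False

/-- The graph `G₈`: two nested quadrilaterals. -/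
def G8 : SimpleGraph (Bool × ZMod 4) := SimpleGraph.fromRel G8Rel

/-- Base relation for `G₉`: `G₈` plus a ninth vertex `w = none` adjacent to the four
inner vertices `u₀, u₁, u₂, u₃`. -/
def G9Rel : Option (Bool × ZMod 4) → Option (Bool × ZMod 4) → Prop
  | some a, some b => G8Rel a b
  | some (true, _), none => True
  | some (false, _), none => False
  | none, _ => False

/-- The graph `G₉`. -/
def G9 : SimpleGraph (Option (Bool × ZMod 4)) := SimpleGraph.fromRel G9Rel

namespace SqArith

/-- closed squares intersect -/
def Ov (A B : AxSquare) : Prop :=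
  A.x ≤ B.x + B.side ∧ B.x ≤ A.x + A.side ∧ A.y ≤ B.y + B.side ∧ B.y ≤ A.y + A.side

/-- interiors disjoint -/
def Dj (A B : AxSquare) : Prop :=
  A.x + A.side ≤ B.x ∨ B.x + B.side ≤ A.x ∨ A.y + A.side ≤ B.y ∨ B.y + B.side ≤ A.y

def Touch (A B : AxSquare) : Prop := Ov A B ∧ Dj A B

/-- intersection is at most a point -/
def Pt (A B : AxSquare) : Prop :=
  (A.x + A.side < B.x ∨ B.x + B.side < A.x ∨ A.y + A.side < B.y ∨ B.y + B.side < A.y) ∨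
  ((A.x + A.side = B.x ∨ B.x + B.side = A.x) ∧ (A.y + A.side = B.y ∨ B.y + B.side = A.y))

lemma Ov.symm {A B} (h : Ov A B) : Ov B A := by unfold Ov at *; tauto
lemma Dj.symm {A B} (h : Dj A B) : Dj B A := by unfold Dj at *; tauto
lemma Touch.symm {A B} (h : Touch A B) : Touch B A := ⟨h.1.symm, h.2.symm⟩
lemma Pt.symm {A B} (h : Pt A B) : Pt B A := by unfold Pt at *; tauto

/-- rotate 90° counterclockwise -/
def rot (S : AxSquare) : AxSquare := ⟨-S.y - S.side, S.x, S.side, S.side_pos⟩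
/-- reflect across the diagonal y = x -/
def dia (S : AxSquare) : AxSquare := ⟨S.y, S.x, S.side, S.side_pos⟩
/-- reflect horizontally (x ↦ -x) -/
def rx (S : AxSquare) : AxSquare := ⟨-S.x - S.side, S.y, S.side, S.side_pos⟩
/-- reflect vertically (y ↦ -y) -/
def fy (S : AxSquare) : AxSquare := ⟨S.x, -S.y - S.side, S.side, S.side_pos⟩

lemma Ov.rot {A B} (h : Ov A B) : Ov (rot A) (rot B) := by
  unfold Ov SqArith.rot at *; dsimp at *; constructor; · linarith
  constructor; · linarith
  constructor; · linarith
  · linarith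
lemma Dj.rot {A B} (h : Dj A B) : Dj (rot A) (rot B) := by
  unfold Dj SqArith.rot at *; dsimp at *
  rcases h with h | h | h | h
  · right; right; left; linarith
  · right; right; right; linarith
  · right; left; linarith
  · left; linarith
lemma Touch.rot {A B} (h : Touch A B) : Touch (rot A) (rot B) := ⟨h.1.rot, h.2.rot⟩
lemma Pt.rot {A B} (h : Pt A B) : Pt (rot A) (rot B) := by
  unfold Pt SqArith.rot at *; dsimp at *
  rcases h with (h | h | h | h) | ⟨hx, hy⟩
  · left; right; right; left; linarith
  · left; right; right; right; linarith
  · left; right; left; linarith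
  · left; left; linarith
  · right
    constructor
    · rcases hy with hy | hy
      · right; linarith
      · left; linarith
    · rcases hx with hx | hx
      · left; linarith
      · right; linarith

lemma Ov.dia {A B} (h : Ov A B) : Ov (dia A) (dia B) := by
  unfold Ov SqArith.dia at *; dsimp at *; tauto
lemma Dj.dia {A B} (h : Dj A B) : Dj (dia A) (dia B) := by
  unfold Dj SqArith.dia at *; dsimp at *; tauto
lemma Touch.dia {A B} (h : Touch A B) : Touch (dia A) (dia B) := ⟨h.1.dia, h.2.dia⟩
lemma Pt.dia {A B} (h : Pt A B) : Pt (dia A) (dia B) := by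
  unfold Pt SqArith.dia at *; dsimp at *; tauto

lemma Ov.rx {A B} (h : Ov A B) : Ov (rx A) (rx B) := by
  unfold Ov SqArith.rx at *; dsimp at *
  exact ⟨by linarith, by linarith, by linarith, by linarith⟩
lemma Dj.rx {A B} (h : Dj A B) : Dj (rx A) (rx B) := by
  unfold Dj SqArith.rx at *; dsimp at *
  rcases h with h | h | h | h
  · right; left; linarith
  · left; linarith
  · right; right; left; linarith
  · right; right; right; linarith
lemma Touch.rx {A B} (h : Touch A B) : Touch (rx A) (rx B) := ⟨h.1.rx, h.2.rx⟩
lemma Pt.rx {A B} (h : Pt A B) : Pt (rx A) (rx B) := by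
  unfold Pt SqArith.rx at *; dsimp at *
  rcases h with (h | h | h | h) | ⟨hx, hy⟩
  · left; right; left; linarith
  · left; left; linarith
  · left; right; right; left; linarith
  · left; right; right; right; linarith
  · right
    refine ⟨?_, ?_⟩
    · rcases hx with hx | hx
      · right; linarith
      · left; linarith
    · exact hy
lemma Ov.fy {A B} (h : Ov A B) : Ov (fy A) (fy B) := by
  unfold Ov SqArith.fy at *; dsimp at *
  exact ⟨by linarith, by linarith, by linarith, by linarith⟩
lemma Dj.fy {A B} (h : Dj A B) : Dj (fy A) (fy B) := by
  unfold Dj SqArith.fy at *; dsimp at *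
  rcases h with h | h | h | h
  · left; linarith
  · right; left; linarith
  · right; right; right; linarith
  · right; right; left; linarith
lemma Touch.fy {A B} (h : Touch A B) : Touch (fy A) (fy B) := ⟨h.1.fy, h.2.fy⟩
lemma Pt.fy {A B} (h : Pt A B) : Pt (fy A) (fy B) := by
  unfold Pt SqArith.fy at *; dsimp at *
  rcases h with (h | h | h | h) | ⟨hx, hy⟩
  · left; left; linarith
  · left; right; left; linarith
  · left; right; right; right; linarith
  · left; right; right; left; linarith
  · right
    refine ⟨hx, ?_⟩
    rcases hy with hy | hy
    · right; linarith
    · left; linarith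

/-- if two touching squares strictly overlap vertically, they abut horizontally -/
lemma Touch.xeq {A B} (h : Touch A B) (h1 : B.y < A.y + A.side) (h2 : A.y < B.y + B.side) :
    A.x + A.side = B.x ∨ B.x + B.side = A.x := by
  obtain ⟨⟨o1, o2, o3, o4⟩, d⟩ := h
  rcases d with d | d | d | d
  · left; linarith
  · right; linarith
  · linarith
  · linarith
lemma Touch.yeq {A B} (h : Touch A B) (h1 : B.x < A.x + A.side) (h2 : A.x < B.x + B.side) :
    A.y + A.side = B.y ∨ B.y + B.side = A.y := by
  obtain ⟨⟨o1, o2, o3, o4⟩, d⟩ := h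
  rcases d with d | d | d | d
  · linarith
  · linarith
  · left; linarith
  · right; linarith

/-- if two point-only squares strictly overlap vertically, they are strictly x-separated -/
lemma Pt.xsep {A B} (h : Pt A B) (h1 : B.y < A.y + A.side) (h2 : A.y < B.y + B.side) :
    A.x + A.side < B.x ∨ B.x + B.side < A.x := by
  rcases h with (h | h | h | h) | ⟨hx, hy⟩
  · left; exact h
  · right; exact h
  · linarith
  · linarith
  · rcases hy with hy | hy <;> linarith
lemma Pt.ysep {A B} (h : Pt A B) (h1 : B.x < A.x + A.side) (h2 : A.x < B.x + B.side) :
    A.y + A.side < B.y ∨ B.y + B.side < A.y := by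
  rcases h with (h | h | h | h) | ⟨hx, hy⟩
  · linarith
  · linarith
  · left; exact h
  · right; exact h
  · rcases hx with hx | hx <;> linarith

/-- direction of a square touching W -/
lemma dirOf {W A : AxSquare} (h : Touch W A) :
    A.y = W.y + W.side ∨ A.x = W.x + W.side ∨ A.y + A.side = W.y ∨ A.x + A.side = W.x := by
  obtain ⟨⟨o1, o2, o3, o4⟩, d⟩ := h
  rcases d with d | d | d | d
  · right; left; linarith
  · right; right; right; linarith
  · left; linarith
  · right; right; left; linarith

end SqArith

namespace SqArith

/-- all four on top is impossible -/
lemma L1 (W A B C D : AxSquare)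
    (dA : A.y = W.y + W.side) (dB : B.y = W.y + W.side)
    (dC : C.y = W.y + W.side) (dD : D.y = W.y + W.side)
    (tAB : Touch A B) (tBC : Touch B C) (tCD : Touch C D) (tDA : Touch D A)
    (pAC : Pt A C) (pBD : Pt B D) : False := by
  have sA := A.side_pos; have sB := B.side_pos; have sC := C.side_pos; have sD := D.side_pos
  have eAB := tAB.xeq (by linarith) (by linarith)
  have eBC := tBC.xeq (by linarith) (by linarith)
  have eCD := tCD.xeq (by linarith) (by linarith)
  have eDA := tDA.xeq (by linarith) (by linarith)
  have sAC := pAC.xsep (by linarith) (by linarith)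
  have sBD := pBD.xsep (by linarith) (by linarith)
  rcases eAB with h1 | h1 <;> rcases eBC with h2 | h2 <;> rcases eCD with h3 | h3 <;>
    rcases eDA with h4 | h4 <;> rcases sAC with h5 | h5 <;> rcases sBD with h6 | h6 <;> linarith

/-- three on top, one on the right is impossible -/
lemma L2 (W A B C D : AxSquare)
    (dA : A.y = W.y + W.side) (dB : B.y = W.y + W.side) (dC : C.y = W.y + W.side)
    (dD : D.x = W.x + W.side)
    (oA : A.x ≤ W.x + W.side) (oC : C.x ≤ W.x + W.side)
    (tAB : Touch A B) (tBC : Touch B C) (tCD : Touch C D) (tDA : Touch D A)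
    (pAC : Pt A C) : False := by
  have sA := A.side_pos; have sB := B.side_pos; have sC := C.side_pos; have sD := D.side_pos
  have eAB := tAB.xeq (by linarith) (by linarith)
  have eBC := tBC.xeq (by linarith) (by linarith)
  -- D.x ≤ A.r from Touch D A ; D.x ≤ C.r from Touch C D
  have hDA : D.x ≤ A.x + A.side := tDA.1.1
  have hCD : D.x ≤ C.x + C.side := tCD.1.2.1
  have sAC := pAC.xsep (by linarith) (by linarith)
  rcases eAB with h1 | h1 <;> rcases eBC with h2 | h2 <;> rcases sAC with h5 | h5 <;> linarith

/-- two on top (A,B), two on the right (C,D) is impossible -/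
lemma L3 (W A B C D : AxSquare)
    (dA : A.y = W.y + W.side) (dB : B.y = W.y + W.side)
    (dC : C.x = W.x + W.side) (dD : D.x = W.x + W.side)
    (oA : A.x ≤ W.x + W.side) (oB : B.x ≤ W.x + W.side)
    (oC : C.y ≤ W.y + W.side) (oD : D.y ≤ W.y + W.side)
    (tAB : Touch A B) (tBC : Touch B C) (tCD : Touch C D) (tDA : Touch D A)
    (pAC : Pt A C) (pBD : Pt B D) : False := by
  have sA := A.side_pos; have sB := B.side_pos; have sC := C.side_pos; have sD := D.side_pos
  have hBr : W.x + W.side ≤ B.x + B.side := by have := tBC.1.2.1; linarith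
  have hAr : W.x + W.side ≤ A.x + A.side := by have := tDA.1.1; linarith
  have hCt : W.y + W.side ≤ C.y + C.side := by have := tBC.1.2.2.1; linarith
  have hDt : W.y + W.side ≤ D.y + D.side := by have := tDA.1.2.2.2; linarith
  have eAB := tAB.xeq (by linarith) (by linarith)
  have eCD := tCD.yeq (by linarith) (by linarith)
  rcases eAB with h1 | h1 <;> rcases eCD with h2 | h2
  · -- B anchored at corner, D anchored at corner
    rcases pBD with (h | h | h | h) | ⟨hx | hx, hy | hy⟩ <;> linarith
  · rcases tBC.2 with h | h | h | h <;> linarith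
  · rcases tDA.2 with h | h | h | h <;> linarith
  · rcases pAC with (h | h | h | h) | ⟨hx | hx, hy | hy⟩ <;> linarith

/-- alternating: A,C on top, B,D on the right is impossible -/
lemma L4 (W A B C D : AxSquare)
    (dA : A.y = W.y + W.side) (dC : C.y = W.y + W.side)
    (dB : B.x = W.x + W.side)
    (oA : A.x ≤ W.x + W.side) (oC : C.x ≤ W.x + W.side)
    (tAB : Touch A B) (tBC : Touch B C) (pAC : Pt A C) : False := by
  have sA := A.side_pos; have sB := B.side_pos; have sC := C.side_pos
  have h1 : B.x ≤ A.x + A.side := tAB.1.2.1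
  have h2 : B.x ≤ C.x + C.side := tBC.1.1
  have sAC := pAC.xsep (by linarith) (by linarith)
  rcases sAC with h | h <;> linarith

/-- A left, B top, C right, D top is impossible -/
lemma L5 (W A B C D : AxSquare)
    (dA : A.x + A.side = W.x) (dB : B.y = W.y + W.side)
    (dC : C.x = W.x + W.side) (dD : D.y = W.y + W.side)
    (tAB : Touch A B) (tBC : Touch B C) (tCD : Touch C D) (tDA : Touch D A)
    (pBD : Pt B D) : False := by
  have sB := B.side_pos; have sD := D.side_pos; have sW := W.side_pos
  have h1 : B.x ≤ A.x + A.side := tAB.1.2.1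
  have h2 : C.x ≤ B.x + B.side := tBC.1.2.1
  have h3 : C.x ≤ D.x + D.side := tCD.1.1
  have h4 : D.x ≤ A.x + A.side := tDA.1.1
  have sBD := pBD.xsep (by linarith) (by linarith)
  rcases sBD with h | h <;> linarith

/-- A top, B right, C bottom, D right is impossible -/
lemma L6 (W A B C D : AxSquare)
    (dA : A.y = W.y + W.side) (dB : B.x = W.x + W.side)
    (dC : C.y + C.side = W.y) (dD : D.x = W.x + W.side)
    (tAB : Touch A B) (tBC : Touch B C) (tCD : Touch C D) (tDA : Touch D A)
    (pBD : Pt B D) : False := by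
  have sB := B.side_pos; have sD := D.side_pos; have sW := W.side_pos
  have h1 : A.y ≤ B.y + B.side := tAB.1.2.2.1
  have h2 : A.y ≤ D.y + D.side := tDA.1.2.2.2
  have h3 : B.y ≤ C.y + C.side := tBC.1.2.2.1
  have h4 : D.y ≤ C.y + C.side := tCD.1.2.2.2
  have sBD := pBD.ysep (by linarith) (by linarith)
  rcases sBD with h | h <;> linarith

end SqArith

namespace SqArith

/-- Corner lemma: U0 on top of W with its right edge at W's right edge, U1 on the right of W;
    then V (touching U0 and U1, point-only with W) lies in the upper half-plane. -/
lemma C1 (W A B V : AxSquare)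
    (dA : A.y = W.y + W.side) (dB : B.x = W.x + W.side)
    (hAr : A.x + A.side = W.x + W.side)
    (tVA : Touch V A) (tVB : Touch V B) (pVW : Pt V W) : W.y + W.side ≤ V.y := by
  have sW := W.side_pos; have sV := V.side_pos; have sB := B.side_pos
  have hVt : A.y ≤ V.y + V.side := tVA.1.2.2.2
  have hVr : B.x ≤ V.x + V.side := tVB.1.2.1
  have hVl : V.x ≤ A.x + A.side := tVA.1.1
  rcases pVW with (h | h | h | h) | ⟨hx, hy⟩
  · linarith
  · linarith
  · linarith
  · linarith
  · rcases hy with hy | hy <;> linarith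

/-- at each corner, one of the two squares retreats -/
lemma cornerAB (W A B : AxSquare)
    (dA : A.y = W.y + W.side) (dB : B.x = W.x + W.side)
    (oA : A.x ≤ W.x + W.side) (oB : B.y ≤ W.y + W.side)
    (t : Touch A B) :
    A.x + A.side = W.x + W.side ∨ B.y + B.side = W.y + W.side := by
  have sA := A.side_pos; have sB := B.side_pos
  obtain ⟨⟨o1, o2, o3, o4⟩, d⟩ := t
  rcases d with h | h | h | h
  · left; linarith
  · linarith
  · linarith
  · right; linarith

/-- chain lemma at corner 1, in the all-A pinwheel -/
lemma C2 (W U0 U1 U2 V0 V1 V2 : AxSquare)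
    (d0 : U0.y = W.y + W.side) (e0 : U0.x + U0.side = W.x + W.side)
    (d1 : U1.x = W.x + W.side) (e1 : U1.y = W.y)
    (d2 : U2.y + U2.side = W.y)
    (hV0 : V0.x + V0.side ≤ W.x) (hV1 : W.y + W.side ≤ V1.y) (hV2 : W.x + W.side ≤ V2.x)
    (tV1U0 : Touch V1 U0) (tV1U1 : Touch V1 U1)
    (tV01 : Touch V0 V1) (tV12 : Touch V1 V2)
    (tV2U2 : Touch V2 U2) (pV2W : Pt V2 W) :
    U1.y + U1.side = U0.y + U0.side := by
  have sW := W.side_pos; have sV1 := V1.side_pos; have sV2 := V2.side_pos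
  have s0 := U0.side_pos; have s1 := U1.side_pos
  obtain ⟨⟨oa1, oa2, oa3, oa4⟩, da⟩ := tV1U0
  obtain ⟨⟨ob1, ob2, ob3, ob4⟩, db⟩ := tV1U1
  rcases db with h | h | h | h
  · -- case (ii): V1.r = W.r ; killed via V2
    exfalso
    have h2 : V2.x ≤ V1.x + V1.side := tV12.1.2.1
    have hV2b : V2.y ≤ U2.y + U2.side := tV2U2.1.2.2.1
    have hovy : V1.y ≤ V2.y + V2.side := tV12.1.2.2.1
    rcases pV2W with (g | g | g | g) | ⟨gx, gy⟩
    · linarith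
    · linarith
    · linarith
    · linarith
    · rcases gy with gy | gy <;> linarith
  · linarith
  · linarith
  · -- case (i): V1.y = U1.t
    rcases da with g | g | g | g
    · linarith
    · -- V1.x = W.r, killed via V0
      exfalso
      have h3 : V1.x ≤ V0.x + V0.side := tV01.1.2.1
      linarith
    · linarith
    · linarith

-- test of a rotated instantiation
example (W U1 U2 V2 : AxSquare) (d1 : U1.x = W.x + W.side) (d2 : U2.y + U2.side = W.y)
    (e1 : U1.y = W.y)
    (a1' : Touch U1 V2) (a2 : Touch U2 V2) (pV2 : Pt V2 W) :
    W.x + W.side ≤ V2.x := by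
  have h := C1 (rot W) (rot U1) (rot U2) (rot V2)
    (by dsimp [rot]; linarith) (by dsimp [rot]; linarith) (by dsimp [rot]; linarith)
    (a1'.symm.rot) (a2.symm.rot) (pV2.rot)
  dsimp [rot] at h
  linarith

end SqArith

namespace SqArith

/-- the all-A pinwheel configuration is impossible -/
lemma L7A (W U0 U1 U2 U3 V0 V1 V2 V3 : AxSquare)
    (d0 : U0.y = W.y + W.side) (d1 : U1.x = W.x + W.side)
    (d2 : U2.y + U2.side = W.y) (d3 : U3.x + U3.side = W.x)
    (e0 : U0.x + U0.side = W.x + W.side) (e1 : U1.y = W.y)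
    (e2 : U2.x = W.x) (e3 : U3.y + U3.side = W.y + W.side)
    (a0 : Touch U0 V0) (a0' : Touch U0 V1) (a1 : Touch U1 V1) (a1' : Touch U1 V2)
    (a2 : Touch U2 V2) (a2' : Touch U2 V3) (a3 : Touch U3 V3) (a3' : Touch U3 V0)
    (tV01 : Touch V0 V1) (tV12 : Touch V1 V2) (tV23 : Touch V2 V3) (tV30 : Touch V3 V0)
    (pV0 : Pt V0 W) (pV1 : Pt V1 W) (pV2 : Pt V2 W) (pV3 : Pt V3 W) : False := by
  have sW := W.side_pos
  -- V half-plane facts via C1 at the four corners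
  have hv1 : W.y + W.side ≤ V1.y := C1 W U0 U1 V1 d0 d1 e0 a0'.symm a1.symm pV1
  have hv2 : W.x + W.side ≤ V2.x := by
    have h := C1 (rot W) (rot U1) (rot U2) (rot V2)
      (by dsimp [rot]; linarith) (by dsimp [rot]; linarith) (by dsimp [rot]; linarith)
      (a1'.symm.rot) (a2.symm.rot) (pV2.rot)
    dsimp [rot] at h; linarith
  have hv3 : V3.y + V3.side ≤ W.y := by
    have h := C1 (rot (rot W)) (rot (rot U2)) (rot (rot U3)) (rot (rot V3))
      (by dsimp [rot]; linarith) (by dsimp [rot]; linarith) (by dsimp [rot]; linarith)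
      (a2'.symm.rot.rot) (a3.symm.rot.rot) (pV3.rot.rot)
    dsimp [rot] at h; linarith
  have hv0 : V0.x + V0.side ≤ W.x := by
    have h := C1 (rot (rot (rot W))) (rot (rot (rot U3))) (rot (rot (rot U0))) (rot (rot (rot V0)))
      (by dsimp [rot]; linarith) (by dsimp [rot]; linarith) (by dsimp [rot]; linarith)
      (a3'.symm.rot.rot.rot) (a0.symm.rot.rot.rot) (pV0.rot.rot.rot)
    dsimp [rot] at h; linarith
  -- chain equalities via C2 at the four corners
  have c1 : U1.y + U1.side = U0.y + U0.side :=
    C2 W U0 U1 U2 V0 V1 V2 d0 e0 d1 e1 d2 hv0 hv1 hv2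
      a0'.symm a1.symm tV01 tV12 a2.symm pV2
  have c2 : U2.x + U2.side = U1.x + U1.side := by
    have h := C2 (rot W) (rot U1) (rot U2) (rot U3) (rot V1) (rot V2) (rot V3)
      (by dsimp [rot]; linarith) (by dsimp [rot]; linarith) (by dsimp [rot]; linarith)
      (by dsimp [rot]; linarith) (by dsimp [rot]; linarith)
      (by dsimp [rot]; linarith) (by dsimp [rot]; linarith) (by dsimp [rot]; linarith)
      (a1'.symm.rot) (a2.symm.rot) (tV12.rot) (tV23.rot) (a3.symm.rot) (pV3.rot)
    dsimp [rot] at h; linarith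
  have c3 : U3.y = U2.y := by
    have h := C2 (rot (rot W)) (rot (rot U2)) (rot (rot U3)) (rot (rot U0))
      (rot (rot V2)) (rot (rot V3)) (rot (rot V0))
      (by dsimp [rot]; linarith) (by dsimp [rot]; linarith) (by dsimp [rot]; linarith)
      (by dsimp [rot]; linarith) (by dsimp [rot]; linarith)
      (by dsimp [rot]; linarith) (by dsimp [rot]; linarith) (by dsimp [rot]; linarith)
      (a2'.symm.rot.rot) (a3.symm.rot.rot) (tV23.rot.rot) (tV30.rot.rot)
      (a0.symm.rot.rot) (pV0.rot.rot)
    dsimp [rot] at h; linarith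
  have c4 : U0.x = U3.x := by
    have h := C2 (rot (rot (rot W))) (rot (rot (rot U3))) (rot (rot (rot U0))) (rot (rot (rot U1)))
      (rot (rot (rot V3))) (rot (rot (rot V0))) (rot (rot (rot V1)))
      (by dsimp [rot]; linarith) (by dsimp [rot]; linarith) (by dsimp [rot]; linarith)
      (by dsimp [rot]; linarith) (by dsimp [rot]; linarith)
      (by dsimp [rot]; linarith) (by dsimp [rot]; linarith) (by dsimp [rot]; linarith)
      (a3'.symm.rot.rot.rot) (a0.symm.rot.rot.rot) (tV30.rot.rot.rot) (tV01.rot.rot.rot)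
      (a1.symm.rot.rot.rot) (pV1.rot.rot.rot)
    dsimp [rot] at h; linarith
  linarith

end SqArith

namespace SqArith

/-- the pinwheel configuration (T,R,B,L) is impossible -/
lemma L7 (W U0 U1 U2 U3 V0 V1 V2 V3 : AxSquare)
    (d0 : U0.y = W.y + W.side) (d1 : U1.x = W.x + W.side)
    (d2 : U2.y + U2.side = W.y) (d3 : U3.x + U3.side = W.x)
    (oW0 : Touch W U0) (oW1 : Touch W U1) (oW2 : Touch W U2) (oW3 : Touch W U3)
    (tU01 : Touch U0 U1) (tU12 : Touch U1 U2) (tU23 : Touch U2 U3) (tU30 : Touch U3 U0)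
    (a0 : Touch U0 V0) (a0' : Touch U0 V1) (a1 : Touch U1 V1) (a1' : Touch U1 V2)
    (a2 : Touch U2 V2) (a2' : Touch U2 V3) (a3 : Touch U3 V3) (a3' : Touch U3 V0)
    (tV01 : Touch V0 V1) (tV12 : Touch V1 V2) (tV23 : Touch V2 V3) (tV30 : Touch V3 V0)
    (pV0 : Pt V0 W) (pV1 : Pt V1 W) (pV2 : Pt V2 W) (pV3 : Pt V3 W) : False := by
  have sW := W.side_pos
  -- corner dichotomies
  have cor1 : U0.x + U0.side = W.x + W.side ∨ U1.y + U1.side = W.y + W.side :=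
    cornerAB W U0 U1 d0 d1 oW0.1.2.1 oW1.1.2.2.2 tU01
  have cor2 : U1.y = W.y ∨ U2.x + U2.side = W.x + W.side := by
    have h := cornerAB (rot W) (rot U1) (rot U2)
      (by dsimp [rot]; linarith) (by dsimp [rot]; linarith)
      (by dsimp [rot]; linarith [oW1.1.2.2.1]) (by dsimp [rot]; linarith [oW2.1.2.1])
      (tU12.rot)
    dsimp [rot] at h
    rcases h with h | h
    · left; linarith
    · right; linarith
  have cor3 : U2.x = W.x ∨ U3.y = W.y := by
    have h := cornerAB (rot (rot W)) (rot (rot U2)) (rot (rot U3))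
      (by dsimp [rot]; linarith) (by dsimp [rot]; linarith)
      (by dsimp [rot]; linarith [oW2.1.1]) (by dsimp [rot]; linarith [oW3.1.2.2.1])
      (tU23.rot.rot)
    dsimp [rot] at h
    rcases h with h | h
    · left; linarith
    · right; linarith
  have cor0 : U3.y + U3.side = W.y + W.side ∨ U0.x = W.x := by
    have h := cornerAB (rot (rot (rot W))) (rot (rot (rot U3))) (rot (rot (rot U0)))
      (by dsimp [rot]; linarith) (by dsimp [rot]; linarith)
      (by dsimp [rot]; linarith [oW3.1.2.2.2]) (by dsimp [rot]; linarith [oW0.1.1])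
      (tU30.rot.rot.rot)
    dsimp [rot] at h
    rcases h with h | h
    · left; linarith
    · right; linarith
  -- conditional half-plane facts for the V squares
  have mkA1 : U0.x + U0.side = W.x + W.side → W.y + W.side ≤ V1.y := fun h =>
    C1 W U0 U1 V1 d0 d1 h a0'.symm a1.symm pV1
  have mkB1 : U1.y + U1.side = W.y + W.side → W.x + W.side ≤ V1.x := by
    intro hB
    have h := C1 (dia W) (dia U1) (dia U0) (dia V1)
      (by dsimp [dia]; linarith) (by dsimp [dia]; linarith) (by dsimp [dia]; linarith)
      (a1.symm.dia) (a0'.symm.dia) (pV1.dia)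
    dsimp [dia] at h; linarith
  have mkA2 : U1.y = W.y → W.x + W.side ≤ V2.x := by
    intro hA
    have h := C1 (rot W) (rot U1) (rot U2) (rot V2)
      (by dsimp [rot]; linarith) (by dsimp [rot]; linarith) (by dsimp [rot]; linarith)
      (a1'.symm.rot) (a2.symm.rot) (pV2.rot)
    dsimp [rot] at h; linarith
  have mkB2 : U2.x + U2.side = W.x + W.side → V2.y + V2.side ≤ W.y := by
    intro hB
    have h := C1 (fy W) (fy U2) (fy U1) (fy V2)
      (by dsimp [fy]; linarith) (by dsimp [fy]; linarith) (by dsimp [fy]; linarith)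
      (a2.symm.fy) (a1'.symm.fy) (pV2.fy)
    dsimp [fy] at h; linarith
  have mkA3 : U2.x = W.x → V3.y + V3.side ≤ W.y := by
    intro hA
    have h := C1 (rot (rot W)) (rot (rot U2)) (rot (rot U3)) (rot (rot V3))
      (by dsimp [rot]; linarith) (by dsimp [rot]; linarith) (by dsimp [rot]; linarith)
      (a2'.symm.rot.rot) (a3.symm.rot.rot) (pV3.rot.rot)
    dsimp [rot] at h; linarith
  have mkB3 : U3.y = W.y → V3.x + V3.side ≤ W.x := by
    intro hB
    have h := C1 (dia (rot (rot W))) (dia (rot (rot U3))) (dia (rot (rot U2))) (dia (rot (rot V3)))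
      (by dsimp [dia, rot]; linarith) (by dsimp [dia, rot]; linarith) (by dsimp [dia, rot]; linarith)
      (a3.symm.rot.rot.dia) (a2'.symm.rot.rot.dia) (pV3.rot.rot.dia)
    dsimp [dia, rot] at h; linarith
  have mkA0 : U3.y + U3.side = W.y + W.side → V0.x + V0.side ≤ W.x := by
    intro hA
    have h := C1 (rot (rot (rot W))) (rot (rot (rot U3))) (rot (rot (rot U0))) (rot (rot (rot V0)))
      (by dsimp [rot]; linarith) (by dsimp [rot]; linarith) (by dsimp [rot]; linarith)
      (a3'.symm.rot.rot.rot) (a0.symm.rot.rot.rot) (pV0.rot.rot.rot)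
    dsimp [rot] at h; linarith
  have mkB0 : U0.x = W.x → W.y + W.side ≤ V0.y := by
    intro hB
    have h := C1 (dia (rot (rot (rot W)))) (dia (rot (rot (rot U0))))
      (dia (rot (rot (rot U3)))) (dia (rot (rot (rot V0))))
      (by dsimp [dia, rot]; linarith) (by dsimp [dia, rot]; linarith) (by dsimp [dia, rot]; linarith)
      (a0.symm.rot.rot.rot.dia) (a3'.symm.rot.rot.rot.dia) (pV0.rot.rot.rot.dia)
    dsimp [dia, rot] at h; linarith
  -- kill facts for mixed corners
  have kill12 : W.y + W.side ≤ V1.y → V2.y + V2.side ≤ W.y → False := by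
    intro h1 h2; have := tV12.1.2.2.1; have := V1.side_pos; linarith
  have kill23 : W.x + W.side ≤ V2.x → V3.x + V3.side ≤ W.x → False := by
    intro h1 h2; have := tV23.1.1; linarith
  have kill30 : V3.y + V3.side ≤ W.y → W.y + W.side ≤ V0.y → False := by
    intro h1 h2; have := tV30.1.2.2.2; linarith
  have kill01 : V0.x + V0.side ≤ W.x → W.x + W.side ≤ V1.x → False := by
    intro h1 h2; have := tV01.1.2.1; linarith
  rcases cor1 with c1 | c1 <;> rcases cor2 with c2 | c2 <;>
    rcases cor3 with c3 | c3 <;> rcases cor0 with c0 | c0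
  · -- AAAA
    exact L7A W U0 U1 U2 U3 V0 V1 V2 V3 d0 d1 d2 d3 c1 c2 c3 c0
      a0 a0' a1 a1' a2 a2' a3 a3' tV01 tV12 tV23 tV30 pV0 pV1 pV2 pV3
  · exact kill30 (mkA3 c3) (mkB0 c0)
  · exact kill23 (mkA2 c2) (mkB3 c3)
  · exact kill23 (mkA2 c2) (mkB3 c3)
  · exact kill12 (mkA1 c1) (mkB2 c2)
  · exact kill12 (mkA1 c1) (mkB2 c2)
  · exact kill12 (mkA1 c1) (mkB2 c2)
  · exact kill12 (mkA1 c1) (mkB2 c2)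
  · exact kill01 (mkA0 c0) (mkB1 c1)
  · exact kill30 (mkA3 c3) (mkB0 c0)
  · exact kill01 (mkA0 c0) (mkB1 c1)
  · exact kill23 (mkA2 c2) (mkB3 c3)
  · exact kill01 (mkA0 c0) (mkB1 c1)
  · exact kill30 (mkA3 c3) (mkB0 c0)
  · exact kill01 (mkA0 c0) (mkB1 c1)
  · -- BBBB : transport through the diagonal reflection
    exact L7A (dia W) (dia U1) (dia U0) (dia U3) (dia U2) (dia V2) (dia V1) (dia V0) (dia V3)
      (by dsimp [dia]; linarith) (by dsimp [dia]; linarith)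
      (by dsimp [dia]; linarith) (by dsimp [dia]; linarith)
      (by dsimp [dia]; linarith) (by dsimp [dia]; linarith)
      (by dsimp [dia]; linarith) (by dsimp [dia]; linarith)
      (a1'.dia) (a1.dia) (a0'.dia) (a0.dia) (a3'.dia) (a3.dia) (a2'.dia) (a2.dia)
      (tV12.symm.dia) (tV01.symm.dia) (tV30.symm.dia) (tV23.symm.dia)
      (pV2.dia) (pV1.dia) (pV0.dia) (pV3.dia)

end SqArith

namespace SqArith

lemma MAIN_T (W U0 U1 U2 U3 V0 V1 V2 V3 : AxSquare)
    (h0 : U0.y = W.y + W.side)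
    (tW0 : Touch W U0) (tW1 : Touch W U1) (tW2 : Touch W U2) (tW3 : Touch W U3)
    (tU01 : Touch U0 U1) (tU12 : Touch U1 U2) (tU23 : Touch U2 U3) (tU30 : Touch U3 U0)
    (a0 : Touch U0 V0) (a0' : Touch U0 V1) (a1 : Touch U1 V1) (a1' : Touch U1 V2)
    (a2 : Touch U2 V2) (a2' : Touch U2 V3) (a3 : Touch U3 V3) (a3' : Touch U3 V0)
    (tV01 : Touch V0 V1) (tV12 : Touch V1 V2) (tV23 : Touch V2 V3) (tV30 : Touch V3 V0)
    (pU02 : Pt U0 U2) (pU13 : Pt U1 U3)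
    (pV0 : Pt V0 W) (pV1 : Pt V1 W) (pV2 : Pt V2 W) (pV3 : Pt V3 W) : False := by
  have sW := W.side_pos
  have s0 := U0.side_pos; have s1 := U1.side_pos; have s2 := U2.side_pos; have s3 := U3.side_pos
  rcases dirOf tW1 with h1 | h1 | h1 | h1
  · rcases dirOf tW2 with h2 | h2 | h2 | h2
    · rcases dirOf tW3 with h3 | h3 | h3 | h3
      · exact L1 W U0 U1 U2 U3 h0 h1 h2 h3 tU01 tU12 tU23 tU30 pU02 pU13
      · exact L2 W U0 U1 U2 U3 h0 h1 h2 h3 tW0.1.2.1 tW2.1.2.1 tU01 tU12 tU23 tU30 pU02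
      · linarith [tU30.1.2.2.2]
      · exact L2 (rx W) (rx U0) (rx U1) (rx U2) (rx U3) (by dsimp [rx]; linarith) (by dsimp [rx]; linarith) (by dsimp [rx]; linarith) (by dsimp [rx]; linarith) (by dsimp [rx]; linarith [tW0.1.1]) (by dsimp [rx]; linarith [tW2.1.1]) tU01.rx tU12.rx tU23.rx tU30.rx pU02.rx
    · rcases dirOf tW3 with h3 | h3 | h3 | h3
      · exact L2 W U3 U0 U1 U2 h3 h0 h1 h2 tW3.1.2.1 tW1.1.2.1 tU30 tU01 tU12 tU23 pU13.symm
      · exact L3 W U0 U1 U2 U3 h0 h1 h2 h3 tW0.1.2.1 tW1.1.2.1 tW2.1.2.2.2 tW3.1.2.2.2 tU01 tU12 tU23 tU30 pU02 pU13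
      · linarith [tU30.1.2.2.2]
      · linarith [tU23.1.1]
    · rcases dirOf tW3 with h3 | h3 | h3 | h3
      · linarith [tU12.1.2.2.1]
      · linarith [tU12.1.2.2.1]
      · linarith [tU12.1.2.2.1]
      · linarith [tU12.1.2.2.1]
    · rcases dirOf tW3 with h3 | h3 | h3 | h3
      · exact L2 (rx W) (rx U3) (rx U0) (rx U1) (rx U2) (by dsimp [rx]; linarith) (by dsimp [rx]; linarith) (by dsimp [rx]; linarith) (by dsimp [rx]; linarith) (by dsimp [rx]; linarith [tW3.1.1]) (by dsimp [rx]; linarith [tW1.1.1]) tU30.rx tU01.rx tU12.rx tU23.rx pU13.symm.rx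
      · linarith [tU23.1.2.1]
      · linarith [tU30.1.2.2.2]
      · exact L3 (rx W) (rx U0) (rx U1) (rx U2) (rx U3) (by dsimp [rx]; linarith) (by dsimp [rx]; linarith) (by dsimp [rx]; linarith) (by dsimp [rx]; linarith) (by dsimp [rx]; linarith [tW0.1.1]) (by dsimp [rx]; linarith [tW1.1.1]) (by dsimp [rx]; linarith [tW2.1.2.2.2]) (by dsimp [rx]; linarith [tW3.1.2.2.2]) tU01.rx tU12.rx tU23.rx tU30.rx pU02.rx pU13.rx
  · rcases dirOf tW2 with h2 | h2 | h2 | h2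
    · rcases dirOf tW3 with h3 | h3 | h3 | h3
      · exact L2 W U2 U3 U0 U1 h2 h3 h0 h1 tW2.1.2.1 tW0.1.2.1 tU23 tU30 tU01 tU12 pU02.symm
      · exact L4 W U0 U1 U2 U3 h0 h2 h1 tW0.1.2.1 tW2.1.2.1 tU01 tU12 pU02
      · linarith [tU30.1.2.2.2]
      · exact L5 W U3 U0 U1 U2 h3 h0 h1 h2 tU30 tU01 tU12 tU23 pU02
    · rcases dirOf tW3 with h3 | h3 | h3 | h3
      · exact L3 W U3 U0 U1 U2 h3 h0 h1 h2 tW3.1.2.1 tW0.1.2.1 tW1.1.2.2.2 tW2.1.2.2.2 tU30 tU01 tU12 tU23 pU13.symm pU02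
      · exact L2 (dia W) (dia U1) (dia U2) (dia U3) (dia U0) (by dsimp [dia]; linarith) (by dsimp [dia]; linarith) (by dsimp [dia]; linarith) (by dsimp [dia]; linarith) (by dsimp [dia]; linarith [tW1.1.2.2.2]) (by dsimp [dia]; linarith [tW3.1.2.2.2]) tU12.dia tU23.dia tU30.dia tU01.dia pU13.dia
      · linarith [tU30.1.2.2.2]
      · linarith [tU23.1.1]
    · rcases dirOf tW3 with h3 | h3 | h3 | h3
      · linarith [tU23.1.2.2.2]
      · exact L6 W U0 U1 U2 U3 h0 h1 h2 h3 tU01 tU12 tU23 tU30 pU13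
      · linarith [tU30.1.2.2.2]
      · exact L7 W U0 U1 U2 U3 V0 V1 V2 V3 h0 h1 h2 h3 tW0 tW1 tW2 tW3 tU01 tU12 tU23 tU30 a0 a0' a1 a1' a2 a2' a3 a3' tV01 tV12 tV23 tV30 pV0 pV1 pV2 pV3
    · rcases dirOf tW3 with h3 | h3 | h3 | h3
      · linarith [tU12.1.1]
      · linarith [tU12.1.1]
      · linarith [tU12.1.1]
      · linarith [tU12.1.1]
  · rcases dirOf tW2 with h2 | h2 | h2 | h2
    · rcases dirOf tW3 with h3 | h3 | h3 | h3
      · linarith [tU01.1.2.2.1]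
      · linarith [tU01.1.2.2.1]
      · linarith [tU01.1.2.2.1]
      · linarith [tU01.1.2.2.1]
    · rcases dirOf tW3 with h3 | h3 | h3 | h3
      · linarith [tU01.1.2.2.1]
      · linarith [tU01.1.2.2.1]
      · linarith [tU01.1.2.2.1]
      · linarith [tU01.1.2.2.1]
    · rcases dirOf tW3 with h3 | h3 | h3 | h3
      · linarith [tU01.1.2.2.1]
      · linarith [tU01.1.2.2.1]
      · linarith [tU01.1.2.2.1]
      · linarith [tU01.1.2.2.1]
    · rcases dirOf tW3 with h3 | h3 | h3 | h3
      · linarith [tU01.1.2.2.1]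
      · linarith [tU01.1.2.2.1]
      · linarith [tU01.1.2.2.1]
      · linarith [tU01.1.2.2.1]
  · rcases dirOf tW2 with h2 | h2 | h2 | h2
    · rcases dirOf tW3 with h3 | h3 | h3 | h3
      · exact L2 (rx W) (rx U2) (rx U3) (rx U0) (rx U1) (by dsimp [rx]; linarith) (by dsimp [rx]; linarith) (by dsimp [rx]; linarith) (by dsimp [rx]; linarith) (by dsimp [rx]; linarith [tW2.1.1]) (by dsimp [rx]; linarith [tW0.1.1]) tU23.rx tU30.rx tU01.rx tU12.rx pU02.symm.rx
      · exact L5 W U1 U2 U3 U0 h1 h2 h3 h0 tU12 tU23 tU30 tU01 pU02.symm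
      · linarith [tU30.1.2.2.2]
      · exact L4 (rx W) (rx U0) (rx U1) (rx U2) (rx U3) (by dsimp [rx]; linarith) (by dsimp [rx]; linarith) (by dsimp [rx]; linarith) (by dsimp [rx]; linarith [tW0.1.1]) (by dsimp [rx]; linarith [tW2.1.1]) tU01.rx tU12.rx pU02.rx
    · rcases dirOf tW3 with h3 | h3 | h3 | h3
      · linarith [tU12.1.2.1]
      · linarith [tU12.1.2.1]
      · linarith [tU12.1.2.1]
      · linarith [tU12.1.2.1]
    · rcases dirOf tW3 with h3 | h3 | h3 | h3
      · linarith [tU23.1.2.2.2]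
      · exact L7 (rx W) (rx U0) (rx U1) (rx U2) (rx U3) (rx V0) (rx V1) (rx V2) (rx V3) (by dsimp [rx]; linarith) (by dsimp [rx]; linarith) (by dsimp [rx]; linarith) (by dsimp [rx]; linarith) tW0.rx tW1.rx tW2.rx tW3.rx tU01.rx tU12.rx tU23.rx tU30.rx a0.rx a0'.rx a1.rx a1'.rx a2.rx a2'.rx a3.rx a3'.rx tV01.rx tV12.rx tV23.rx tV30.rx pV0.rx pV1.rx pV2.rx pV3.rx
      · linarith [tU30.1.2.2.2]
      · exact L6 (rx W) (rx U0) (rx U1) (rx U2) (rx U3) (by dsimp [rx]; linarith) (by dsimp [rx]; linarith) (by dsimp [rx]; linarith) (by dsimp [rx]; linarith) tU01.rx tU12.rx tU23.rx tU30.rx pU13.rx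
    · rcases dirOf tW3 with h3 | h3 | h3 | h3
      · exact L3 (rx W) (rx U3) (rx U0) (rx U1) (rx U2) (by dsimp [rx]; linarith) (by dsimp [rx]; linarith) (by dsimp [rx]; linarith) (by dsimp [rx]; linarith) (by dsimp [rx]; linarith [tW3.1.1]) (by dsimp [rx]; linarith [tW0.1.1]) (by dsimp [rx]; linarith [tW1.1.2.2.2]) (by dsimp [rx]; linarith [tW2.1.2.2.2]) tU30.rx tU01.rx tU12.rx tU23.rx pU13.symm.rx pU02.rx
      · linarith [tU23.1.2.1]
      · linarith [tU30.1.2.2.2]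
      · exact L2 (dia (rx W)) (dia (rx U1)) (dia (rx U2)) (dia (rx U3)) (dia (rx U0)) (by dsimp [dia, rx]; linarith) (by dsimp [dia, rx]; linarith) (by dsimp [dia, rx]; linarith) (by dsimp [dia, rx]; linarith) (by dsimp [dia, rx]; linarith [tW1.1.2.2.2]) (by dsimp [dia, rx]; linarith [tW3.1.2.2.2]) tU12.rx.dia tU23.rx.dia tU30.rx.dia tU01.rx.dia pU13.rx.dia

end SqArith

namespace SqArith

lemma MAIN (W U0 U1 U2 U3 V0 V1 V2 V3 : AxSquare)
    (tW0 : Touch W U0) (tW1 : Touch W U1) (tW2 : Touch W U2) (tW3 : Touch W U3)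
    (tU01 : Touch U0 U1) (tU12 : Touch U1 U2) (tU23 : Touch U2 U3) (tU30 : Touch U3 U0)
    (a0 : Touch U0 V0) (a0' : Touch U0 V1) (a1 : Touch U1 V1) (a1' : Touch U1 V2)
    (a2 : Touch U2 V2) (a2' : Touch U2 V3) (a3 : Touch U3 V3) (a3' : Touch U3 V0)
    (tV01 : Touch V0 V1) (tV12 : Touch V1 V2) (tV23 : Touch V2 V3) (tV30 : Touch V3 V0)
    (pU02 : Pt U0 U2) (pU13 : Pt U1 U3)
    (pV0 : Pt V0 W) (pV1 : Pt V1 W) (pV2 : Pt V2 W) (pV3 : Pt V3 W) : False := by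
  rcases dirOf tW0 with h | h | h | h
  · exact MAIN_T W U0 U1 U2 U3 V0 V1 V2 V3 h tW0 tW1 tW2 tW3 tU01 tU12 tU23 tU30
      a0 a0' a1 a1' a2 a2' a3 a3' tV01 tV12 tV23 tV30 pU02 pU13 pV0 pV1 pV2 pV3
  · exact MAIN_T (rot W) (rot U0) (rot U1) (rot U2) (rot U3) (rot V0) (rot V1) (rot V2) (rot V3)
      (by dsimp [rot]; linarith) tW0.rot tW1.rot tW2.rot tW3.rot
      tU01.rot tU12.rot tU23.rot tU30.rot
      a0.rot a0'.rot a1.rot a1'.rot a2.rot a2'.rot a3.rot a3'.rot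
      tV01.rot tV12.rot tV23.rot tV30.rot pU02.rot pU13.rot pV0.rot pV1.rot pV2.rot pV3.rot
  · exact MAIN_T (rot (rot W)) (rot (rot U0)) (rot (rot U1)) (rot (rot U2)) (rot (rot U3))
      (rot (rot V0)) (rot (rot V1)) (rot (rot V2)) (rot (rot V3))
      (by dsimp [rot]; linarith) tW0.rot.rot tW1.rot.rot tW2.rot.rot tW3.rot.rot
      tU01.rot.rot tU12.rot.rot tU23.rot.rot tU30.rot.rot
      a0.rot.rot a0'.rot.rot a1.rot.rot a1'.rot.rot a2.rot.rot a2'.rot.rot a3.rot.rot a3'.rot.rot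
      tV01.rot.rot tV12.rot.rot tV23.rot.rot tV30.rot.rot
      pU02.rot.rot pU13.rot.rot pV0.rot.rot pV1.rot.rot pV2.rot.rot pV3.rot.rot
  · exact MAIN_T (rot (rot (rot W))) (rot (rot (rot U0))) (rot (rot (rot U1)))
      (rot (rot (rot U2))) (rot (rot (rot U3)))
      (rot (rot (rot V0))) (rot (rot (rot V1))) (rot (rot (rot V2))) (rot (rot (rot V3)))
      (by dsimp [rot]; linarith)
      tW0.rot.rot.rot tW1.rot.rot.rot tW2.rot.rot.rot tW3.rot.rot.rot
      tU01.rot.rot.rot tU12.rot.rot.rot tU23.rot.rot.rot tU30.rot.rot.rot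
      a0.rot.rot.rot a0'.rot.rot.rot a1.rot.rot.rot a1'.rot.rot.rot
      a2.rot.rot.rot a2'.rot.rot.rot a3.rot.rot.rot a3'.rot.rot.rot
      tV01.rot.rot.rot tV12.rot.rot.rot tV23.rot.rot.rot tV30.rot.rot.rot
      pU02.rot.rot.rot pU13.rot.rot.rot pV0.rot.rot.rot pV1.rot.rot.rot pV2.rot.rot.rot pV3.rot.rot.rot

/-- nonempty intersection gives closed overlap -/
lemma ov_of_nonempty {A B : AxSquare} (h : (A.toSet ∩ B.toSet).Nonempty) : Ov A B := by
  obtain ⟨p, hA, hB⟩ := h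
  simp only [AxSquare.toSet, Set.mem_prod, Set.mem_Icc] at hA hB
  obtain ⟨⟨a1, a2⟩, a3, a4⟩ := hA
  obtain ⟨⟨b1, b2⟩, b3, b4⟩ := hB
  exact ⟨by linarith, by linarith, by linarith, by linarith⟩

/-- disjoint interiors give Dj -/
lemma dj_of_empty {A B : AxSquare} (h : interior A.toSet ∩ interior B.toSet = ∅) : Dj A B := by
  by_contra hd
  unfold Dj at hd
  push_neg at hd
  obtain ⟨k1, k2, k3, k4⟩ := hd
  have hx : max A.x B.x < min (A.x + A.side) (B.x + B.side) := by
    rcases max_cases A.x B.x with ⟨hm, _⟩ | ⟨hm, _⟩ <;>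
      rcases min_cases (A.x + A.side) (B.x + B.side) with ⟨hn, _⟩ | ⟨hn, _⟩ <;>
      rw [hm, hn] <;> linarith [A.side_pos, B.side_pos]
  have hy : max A.y B.y < min (A.y + A.side) (B.y + B.side) := by
    rcases max_cases A.y B.y with ⟨hm, _⟩ | ⟨hm, _⟩ <;>
      rcases min_cases (A.y + A.side) (B.y + B.side) with ⟨hn, _⟩ | ⟨hn, _⟩ <;>
      rw [hm, hn] <;> linarith [A.side_pos, B.side_pos]
  set px := (max A.x B.x + min (A.x + A.side) (B.x + B.side)) / 2 with hpx
  set py := (max A.y B.y + min (A.y + A.side) (B.y + B.side)) / 2 with hpy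
  have hmemA : (px, py) ∈ interior A.toSet := by
    have hsub : Set.Ioo A.x (A.x + A.side) ×ˢ Set.Ioo A.y (A.y + A.side) ⊆ interior A.toSet :=
      interior_maximal (Set.prod_mono Set.Ioo_subset_Icc_self Set.Ioo_subset_Icc_self)
        (IsOpen.prod isOpen_Ioo isOpen_Ioo)
    apply hsub
    constructor
    · constructor
      · have := le_max_left A.x B.x; simp only [hpx]; linarith
      · have := min_le_left (A.x + A.side) (B.x + B.side); simp only [hpx]; linarith
    · constructor
      · have := le_max_left A.y B.y; simp only [hpy]; linarith
      · have := min_le_left (A.y + A.side) (B.y + B.side); simp only [hpy]; linarith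
  have hmemB : (px, py) ∈ interior B.toSet := by
    have hsub : Set.Ioo B.x (B.x + B.side) ×ˢ Set.Ioo B.y (B.y + B.side) ⊆ interior B.toSet :=
      interior_maximal (Set.prod_mono Set.Ioo_subset_Icc_self Set.Ioo_subset_Icc_self)
        (IsOpen.prod isOpen_Ioo isOpen_Ioo)
    apply hsub
    constructor
    · constructor
      · have := le_max_right A.x B.x; simp only [hpx]; linarith
      · have := min_le_right (A.x + A.side) (B.x + B.side); simp only [hpx]; linarith
    · constructor
      · have := le_max_right A.y B.y; simp only [hpy]; linarith
      · have := min_le_right (A.y + A.side) (B.y + B.side); simp only [hpy]; linarith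
  rw [Set.eq_empty_iff_forall_notMem] at h
  exact h _ ⟨hmemA, hmemB⟩

/-- subsingleton intersection gives Pt -/
lemma pt_of_ss {A B : AxSquare} (h : (A.toSet ∩ B.toSet).Subsingleton) : Pt A B := by
  by_contra hp
  unfold Pt at hp
  push_neg at hp
  obtain ⟨⟨k1, k2, k3, k4⟩, hc⟩ := hp
  have hmem : ∀ u v : ℝ, max A.x B.x ≤ u → u ≤ min (A.x + A.side) (B.x + B.side) →
      max A.y B.y ≤ v → v ≤ min (A.y + A.side) (B.y + B.side) →
      (u, v) ∈ A.toSet ∩ B.toSet := by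
    intro u v h1 h2 h3 h4
    have m1 := le_max_left A.x B.x; have m2 := le_max_right A.x B.x
    have m3 := min_le_left (A.x + A.side) (B.x + B.side)
    have m4 := min_le_right (A.x + A.side) (B.x + B.side)
    have m5 := le_max_left A.y B.y; have m6 := le_max_right A.y B.y
    have m7 := min_le_left (A.y + A.side) (B.y + B.side)
    have m8 := min_le_right (A.y + A.side) (B.y + B.side)
    constructor <;> simp only [AxSquare.toSet, Set.mem_prod, Set.mem_Icc] <;>
      exact ⟨⟨by linarith, by linarith⟩, by linarith, by linarith⟩
  have hyle : max A.y B.y ≤ min (A.y + A.side) (B.y + B.side) := by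
    rcases max_cases A.y B.y with ⟨hm, _⟩ | ⟨hm, _⟩ <;>
      rcases min_cases (A.y + A.side) (B.y + B.side) with ⟨hn, _⟩ | ⟨hn, _⟩ <;>
      rw [hm, hn] <;> linarith [A.side_pos, B.side_pos]
  have hxle : max A.x B.x ≤ min (A.x + A.side) (B.x + B.side) := by
    rcases max_cases A.x B.x with ⟨hm, _⟩ | ⟨hm, _⟩ <;>
      rcases min_cases (A.x + A.side) (B.x + B.side) with ⟨hn, _⟩ | ⟨hn, _⟩ <;>
      rw [hm, hn] <;> linarith [A.side_pos, B.side_pos]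
  by_cases hX : A.x + A.side = B.x ∨ B.x + B.side = A.x
  · -- x contact degenerate, so y contact is not
    have hY := hc hX
    have hylt : max A.y B.y < min (A.y + A.side) (B.y + B.side) := by
      rcases max_cases A.y B.y with ⟨hm, _⟩ | ⟨hm, _⟩ <;>
        rcases min_cases (A.y + A.side) (B.y + B.side) with ⟨hn, _⟩ | ⟨hn, _⟩ <;>
        rw [hm, hn] <;> first
          | linarith [A.side_pos, B.side_pos]
          | exact lt_of_le_of_ne k4 (fun hq => hY.2 hq.symm)
          | exact lt_of_le_of_ne k3 (fun hq => hY.1 hq.symm)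
    have p1 := hmem (max A.x B.x) (max A.y B.y) le_rfl hxle le_rfl hylt.le
    have p2 := hmem (max A.x B.x) (min (A.y + A.side) (B.y + B.side)) le_rfl hxle hylt.le le_rfl
    have := h p1 p2
    simp only [Prod.mk.injEq] at this
    linarith [this.2]
  · push_neg at hX
    have hxlt : max A.x B.x < min (A.x + A.side) (B.x + B.side) :=
      lt_of_le_of_ne hxle (by
        rcases max_cases A.x B.x with ⟨hm, _⟩ | ⟨hm, _⟩ <;>
          rcases min_cases (A.x + A.side) (B.x + B.side) with ⟨hn, _⟩ | ⟨hn, _⟩ <;>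
          rw [hm, hn] <;> intro hq <;> first
            | linarith [A.side_pos, B.side_pos]
            | exact hX.1 (by linarith)
            | exact hX.2 (by linarith))
    have p1 := hmem (max A.x B.x) (max A.y B.y) le_rfl hxlt.le le_rfl hyle
    have p2 := hmem (min (A.x + A.side) (B.x + B.side)) (max A.y B.y) hxlt.le le_rfl le_rfl hyle
    have := h p1 p2
    simp only [Prod.mk.injEq] at this
    linarith [this.1]

end SqArith

open SqArith

/-- witness for Theorem on 3-outerplanar simply-nested graphs:
the graph `G₉` admits no weak square-contact representation; in particular it admits
no proper square-contact representation. -/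
theorem G9_not_hasWeakSCR : ¬ HasWeakSCR G9 ∧ ¬ HasSCR G9 := by
  have hweak : ¬ HasWeakSCR G9 := by
    rintro ⟨Sq, h1, h2, h3⟩
    have mkT : ∀ a b : Option (Bool × ZMod 4), G9.Adj a b → Touch (Sq a) (Sq b) := fun a b hab =>
      ⟨ov_of_nonempty (h2 a trivial b trivial hab),
       dj_of_empty (h1 a trivial b trivial hab.ne)⟩
    have mkP : ∀ a b : Option (Bool × ZMod 4), a ≠ b → ¬ G9.Adj a b → Pt (Sq a) (Sq b) :=
      fun a b hne hna => pt_of_ss (h3 a trivial b trivial hne hna)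
    have adjE : ∀ a b : Option (Bool × ZMod 4), a ≠ b → G9Rel a b → G9.Adj a b :=
      fun a b hne hr => (SimpleGraph.fromRel_adj _ _ _).mpr ⟨hne, Or.inl hr⟩
    have adjW : ∀ i : ZMod 4, G9.Adj none (some (true, i)) := fun i =>
      (SimpleGraph.fromRel_adj _ _ _).mpr ⟨by simp, Or.inr trivial⟩
    -- the nine squares
    set W := Sq none
    set U0 := Sq (some (true, 0)); set U1 := Sq (some (true, 1))
    set U2 := Sq (some (true, 2)); set U3 := Sq (some (true, 3))
    set V0 := Sq (some (false, 0)); set V1 := Sq (some (false, 1))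
    set V2 := Sq (some (false, 2)); set V3 := Sq (some (false, 3))
    refine MAIN W U0 U1 U2 U3 V0 V1 V2 V3
      (mkT _ _ (adjW 0)) (mkT _ _ (adjW 1)) (mkT _ _ (adjW 2)) (mkT _ _ (adjW 3))
      (mkT _ _ (adjE (some (true, 0)) (some (true, 1)) (by decide) (show (1 : ZMod 4) = 0 + 1 by decide)))
      (mkT _ _ (adjE (some (true, 1)) (some (true, 2)) (by decide) (show (2 : ZMod 4) = 1 + 1 by decide)))
      (mkT _ _ (adjE (some (true, 2)) (some (true, 3)) (by decide) (show (3 : ZMod 4) = 2 + 1 by decide)))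
      (mkT _ _ (adjE (some (true, 3)) (some (true, 0)) (by decide) (show (0 : ZMod 4) = 3 + 1 by decide)))
      (mkT _ _ (adjE (some (true, 0)) (some (false, 0)) (by decide) (show (0 : ZMod 4) = 0 ∨ (0 : ZMod 4) = 0 + 1 by decide)))
      (mkT _ _ (adjE (some (true, 0)) (some (false, 1)) (by decide) (show (1 : ZMod 4) = 0 ∨ (1 : ZMod 4) = 0 + 1 by decide)))
      (mkT _ _ (adjE (some (true, 1)) (some (false, 1)) (by decide) (show (1 : ZMod 4) = 1 ∨ (1 : ZMod 4) = 1 + 1 by decide)))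
      (mkT _ _ (adjE (some (true, 1)) (some (false, 2)) (by decide) (show (2 : ZMod 4) = 1 ∨ (2 : ZMod 4) = 1 + 1 by decide)))
      (mkT _ _ (adjE (some (true, 2)) (some (false, 2)) (by decide) (show (2 : ZMod 4) = 2 ∨ (2 : ZMod 4) = 2 + 1 by decide)))
      (mkT _ _ (adjE (some (true, 2)) (some (false, 3)) (by decide) (show (3 : ZMod 4) = 2 ∨ (3 : ZMod 4) = 2 + 1 by decide)))
      (mkT _ _ (adjE (some (true, 3)) (some (false, 3)) (by decide) (show (3 : ZMod 4) = 3 ∨ (3 : ZMod 4) = 3 + 1 by decide)))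
      (mkT _ _ (adjE (some (true, 3)) (some (false, 0)) (by decide) (show (0 : ZMod 4) = 3 ∨ (0 : ZMod 4) = 3 + 1 by decide)))
      (mkT _ _ (adjE (some (false, 0)) (some (false, 1)) (by decide) (show (1 : ZMod 4) = 0 + 1 by decide)))
      (mkT _ _ (adjE (some (false, 1)) (some (false, 2)) (by decide) (show (2 : ZMod 4) = 1 + 1 by decide)))
      (mkT _ _ (adjE (some (false, 2)) (some (false, 3)) (by decide) (show (3 : ZMod 4) = 2 + 1 by decide)))
      (mkT _ _ (adjE (some (false, 3)) (some (false, 0)) (by decide) (show (0 : ZMod 4) = 3 + 1 by decide)))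
      (mkP (some (true, 0)) (some (true, 2)) (by decide) ?_)
      (mkP (some (true, 1)) (some (true, 3)) (by decide) ?_)
      (mkP (some (false, 0)) none (by simp) ?_) (mkP (some (false, 1)) none (by simp) ?_)
      (mkP (some (false, 2)) none (by simp) ?_) (mkP (some (false, 3)) none (by simp) ?_)
    · rintro h
      rcases (SimpleGraph.fromRel_adj _ _ _).mp h with ⟨-, h | h⟩
      · exact (by decide : ¬ ((2 : ZMod 4) = 0 + 1)) h
      · exact (by decide : ¬ ((0 : ZMod 4) = 2 + 1)) h
    · rintro h
      rcases (SimpleGraph.fromRel_adj _ _ _).mp h with ⟨-, h | h⟩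
      · exact (by decide : ¬ ((3 : ZMod 4) = 1 + 1)) h
      · exact (by decide : ¬ ((1 : ZMod 4) = 3 + 1)) h
    · rintro h
      rcases (SimpleGraph.fromRel_adj _ _ _).mp h with ⟨-, h | h⟩ <;> exact h
    · rintro h
      rcases (SimpleGraph.fromRel_adj _ _ _).mp h with ⟨-, h | h⟩ <;> exact h
    · rintro h
      rcases (SimpleGraph.fromRel_adj _ _ _).mp h with ⟨-, h | h⟩ <;> exact h
    · rintro h
      rcases (SimpleGraph.fromRel_adj _ _ _).mp h with ⟨-, h | h⟩ <;> exact h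
  refine ⟨hweak, fun hscr => hweak ?_⟩
  obtain ⟨Sq, h1, h2, h3⟩ := hscr
  exact ⟨Sq, h1, fun u hu v hv huv => (h2 u hu v hv huv).nonempty,
    fun u hu v hv hne hna => by rw [h3 u hu v hv hne hna]; exact Set.subsingleton_empty⟩
end
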